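/- arXiv:1804.06118 — 7 statements merged into one kernel-verified Lean document; each statement's English description precedes it below -/
import Mathlib

section
/- Let L/k be a finite Galois extension of fields with Galois group G, acting entrywise on matrices over L, and let n be a positive integer. If c : G → GL_n(L) satisfies the 1-cocycle condition c(στ) = c(σ)·σ(c(τ)) for all σ, τ ∈ G, then there exists P ∈ GL_n(L) such that c(σ) = P·σ(P)⁻¹ for all σ ∈ G. (Equivalently, the first Galois cohomology set H¹(Gal(L/k), GL_n(L)) is trivial.) -/
open Matrix Submodule


/-- **Hilbert's Theorem 90 for `GLₙ`.**  For a finite Galois extension `L/k`, every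
1-cocycle of `Gal(L/k)` with values in `GLₙ(L)` (the Galois group acting entrywise)
is a coboundary: `H¹(Gal(L/k), GLₙ(L))` is trivial. -/
theorem hilbert90_GL
    (k L : Type*) [Field k] [Field L] [Algebra k L]
    [FiniteDimensional k L] [IsGalois k L]
    (n : ℕ) (hn : 0 < n)
    (c : (L ≃ₐ[k] L) → GL (Fin n) L)
    (hc : ∀ σ τ : L ≃ₐ[k] L,
      (c (σ * τ) : Matrix (Fin n) (Fin n) L)
        = (c σ : Matrix (Fin n) (Fin n) L) * (c τ : Matrix (Fin n) (Fin n) L).map σ) :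
    ∃ P : GL (Fin n) L, ∀ σ : L ≃ₐ[k] L,
      (c σ : Matrix (Fin n) (Fin n) L)
        = (P : Matrix (Fin n) (Fin n) L) *
            ((P⁻¹ : GL (Fin n) L) : Matrix (Fin n) (Fin n) L).map σ := by
  classical
  -- c 1 = 1
  have hc1 : (c 1 : Matrix (Fin n) (Fin n) L) = 1 := by
    have h := hc 1 1
    rw [one_mul] at h
    have : (c 1 : Matrix (Fin n) (Fin n) L).map (1 : L ≃ₐ[k] L)
        = (c 1 : Matrix (Fin n) (Fin n) L) := by
      ext i j; simp
    rw [this] at h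
    have hu : IsUnit (c 1 : Matrix (Fin n) (Fin n) L) := (c 1).isUnit
    have := hu.mul_left_cancel (a := (c 1 : Matrix (Fin n) (Fin n) L))
      (b := (1 : Matrix (Fin n) (Fin n) L)) (c := (c 1 : Matrix (Fin n) (Fin n) L))
      (by rw [mul_one, ← h])
    exact this.symm
  -- the averaging map
  set B : (Fin n → L) → (Fin n → L) :=
    fun v => ∑ σ : L ≃ₐ[k] L, (c σ : Matrix (Fin n) (Fin n) L).mulVec (fun i => σ (v i)) with hB
  -- B v is a "fixed point" of the twisted action
  have hfix : ∀ (τ : L ≃ₐ[k] L) (v : Fin n → L),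
      (c τ : Matrix (Fin n) (Fin n) L).mulVec (fun i => τ (B v i)) = B v := by
    intro τ v
    have h1 : (fun i => τ (B v i))
        = ∑ σ : L ≃ₐ[k] L,
            ((c σ : Matrix (Fin n) (Fin n) L).map τ).mulVec (fun i => τ (σ (v i))) := by
      funext i
      rw [hB]
      simp only [Finset.sum_apply]
      rw [map_sum]
      refine Finset.sum_congr rfl fun σ _ => ?_
      simp only [mulVec, dotProduct, Matrix.map_apply]
      rw [map_sum]
      refine Finset.sum_congr rfl fun j _ => ?_
      rw [_root_.map_mul τ]
    rw [h1, ← Matrix.mulVecLin_apply, map_sum]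
    simp only [Matrix.mulVecLin_apply]
    have h2 : ∀ σ : L ≃ₐ[k] L,
        (c τ : Matrix (Fin n) (Fin n) L).mulVec
          (((c σ : Matrix (Fin n) (Fin n) L).map τ).mulVec (fun i => τ (σ (v i))))
        = (c (τ * σ) : Matrix (Fin n) (Fin n) L).mulVec (fun i => (τ * σ) (v i)) := by
      intro σ
      rw [Matrix.mulVec_mulVec, ← hc τ σ]
      rfl
    rw [Finset.sum_congr rfl fun σ _ => h2 σ]
    rw [hB]
    exact Fintype.sum_bijective (fun σ => τ * σ) (Group.mulLeft_bijective τ) _ _ (fun σ => rfl)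
  -- the range of B spans everything
  have hspan : span L (Set.range B) = ⊤ := by
    by_contra htop
    obtain ⟨f, hf0, hfbot⟩ := Submodule.exists_dual_map_eq_bot_of_lt_top
      (lt_top_iff_ne_top.2 htop) inferInstance
    have hfB : ∀ v, f (B v) = 0 := by
      intro v
      have : f (B v) ∈ (span L (Set.range B)).map f :=
        ⟨B v, subset_span ⟨v, rfl⟩, rfl⟩
      rw [hfbot] at this
      exact (Submodule.mem_bot L).1 this
    -- evaluate on v = Pi.single j x
    have key : ∀ (j : Fin n) (σ : L ≃ₐ[k] L),
        f (fun i => (c σ : Matrix (Fin n) (Fin n) L) i j) = 0 := by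
      intro j σ₀
      have hli : LinearIndependent L (fun (σ : L ≃ₐ[k] L) => (σ : L → L)) :=
        LinearIndependent.comp (ι' := L ≃ₐ[k] L)
          (linearIndependent_monoidHom L L) (fun f => f)
          (fun x y h => by ext; exact DFunLike.ext_iff.1 h _)
      have := Fintype.linearIndependent_iff.1 hli
        (fun σ => f (fun i => (c σ : Matrix (Fin n) (Fin n) L) i j)) ?_ σ₀
      · exact this
      · funext x
        have hval : ∀ σ : L ≃ₐ[k] L,
            (fun i => σ ((Pi.single j x : Fin n → L) i)) = (Pi.single j (σ x) : Fin n → L) := by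
          intro σ; funext i
          by_cases h : i = j
          · subst h; simp
          · simp [Pi.single_eq_of_ne h]
        have := hfB (Pi.single j x)
        rw [hB] at this
        simp only [map_sum] at this
        rw [Finset.sum_congr rfl (fun σ _ => by rw [hval σ])] at this
        have h3 : ∀ σ : L ≃ₐ[k] L,
            f ((c σ : Matrix (Fin n) (Fin n) L).mulVec (Pi.single j (σ x)))
            = f (fun i => (c σ : Matrix (Fin n) (Fin n) L) i j) * σ x := by
          intro σ
          have : (c σ : Matrix (Fin n) (Fin n) L).mulVec (Pi.single j (σ x))
              = σ x • (fun i => (c σ : Matrix (Fin n) (Fin n) L) i j) := by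
            funext i
            rw [Matrix.mulVec_single]
            simp [mul_comm]
          rw [this, f.map_smul, smul_eq_mul, mul_comm]
        rw [Finset.sum_congr rfl (fun σ _ => h3 σ)] at this
        simpa only [Finset.sum_apply, Pi.smul_apply, Pi.zero_apply, smul_eq_mul] using this
    -- f vanishes on the standard basis (σ = 1), hence f = 0
    apply hf0
    have : ∀ j, f (Pi.single j 1) = 0 := by
      intro j
      have h := key j 1
      rw [hc1] at h
      have h4 : (fun i => (1 : Matrix (Fin n) (Fin n) L) i j) = Pi.single j 1 := by
        funext i
        simp [Matrix.one_apply, Pi.single_apply]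
      rwa [h4] at h
    apply (Pi.basisFun L (Fin n)).ext
    intro j
    simpa [Pi.basisFun_apply] using this j
  -- extract a basis from the range of B
  obtain ⟨b, hbsub, hbspan, hbli⟩ := exists_linearIndependent L (Set.range B)
  rw [hspan] at hbspan
  set bas : Module.Basis b L (Fin n → L) := Module.Basis.mk hbli (by rw [Subtype.range_coe, hbspan]) with hbasdef
  have e : b ≃ Fin n := bas.indexEquiv (Pi.basisFun L (Fin n))
  set bas' : Module.Basis (Fin n) L (Fin n → L) := bas.reindex e with hbas'
  have hmem : ∀ i : Fin n, (bas' i) ∈ Set.range B := by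
    intro i
    rw [hbas', Module.Basis.reindex_apply, hbasdef, Module.Basis.mk_apply]
    exact hbsub (e.symm i).2
  -- the matrix whose columns are bas'
  set P : Matrix (Fin n) (Fin n) L := (Pi.basisFun L (Fin n)).toMatrix (fun i => bas' i) with hP
  have hPcol : ∀ i j, P i j = bas' j i := by
    intro i j
    simp [hP, Module.Basis.toMatrix_apply]
  have : Invertible P := (Pi.basisFun L (Fin n)).invertibleToMatrix bas'
  set u : GL (Fin n) L := unitOfInvertible P with hu
  refine ⟨u, fun σ => ?_⟩
  have hkey : (c σ : Matrix (Fin n) (Fin n) L) * P.map σ = P := by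
    ext i j
    have h1 : ((c σ : Matrix (Fin n) (Fin n) L) * P.map σ) i j
        = ((c σ : Matrix (Fin n) (Fin n) L).mulVec (fun l => σ (bas' j l))) i := by
      simp only [Matrix.mul_apply, mulVec, dotProduct, Matrix.map_apply]
      exact Finset.sum_congr rfl fun l _ => by rw [hPcol l j]
    obtain ⟨v, hv⟩ := hmem j
    rw [h1, ← hv, hfix σ v, hv, hPcol]
  have hmm : ∀ (M N : Matrix (Fin n) (Fin n) L), (M * N).map ⇑σ = M.map ⇑σ * N.map ⇑σ := by
    intro M N
    ext i j
    simp [Matrix.map_apply, Matrix.mul_apply, map_sum, _root_.map_mul]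
  have hmapmul : P.map σ * ((u⁻¹ : GL (Fin n) L) : Matrix (Fin n) (Fin n) L).map σ = 1 := by
    have h1 : (u : Matrix (Fin n) (Fin n) L) * ((u⁻¹ : GL (Fin n) L) : Matrix (Fin n) (Fin n) L)
        = 1 := u.mul_inv
    calc P.map ⇑σ * ((u⁻¹ : GL (Fin n) L) : Matrix (Fin n) (Fin n) L).map ⇑σ
        = ((u : Matrix (Fin n) (Fin n) L) *
            ((u⁻¹ : GL (Fin n) L) : Matrix (Fin n) (Fin n) L)).map ⇑σ := (hmm _ _).symm
      _ = (1 : Matrix (Fin n) (Fin n) L).map ⇑σ := by rw [h1]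
      _ = 1 := Matrix.map_one _ (map_zero σ) (map_one σ)
  calc (c σ : Matrix (Fin n) (Fin n) L)
      = (c σ : Matrix (Fin n) (Fin n) L) *
        (P.map σ * ((u⁻¹ : GL (Fin n) L) : Matrix (Fin n) (Fin n) L).map σ) := by
        rw [hmapmul, mul_one]
    _ = (u : Matrix (Fin n) (Fin n) L) *
        ((u⁻¹ : GL (Fin n) L) : Matrix (Fin n) (Fin n) L).map σ := by
        rw [← mul_assoc, hkey]; rfl
end

section
/- For a ∈ kˣ, the set A_a := {M ∈ M_{n+1}(L) : C_a·σ(M)·C_a⁻¹ = M} is a k-subalgebra of the matrix algebra M_{n+1}(L), its dimension as a k-vector space is (n+1)², and every element of A_a can be written uniquely in the form Σ_{i=0}^{n} S_{b_i}·C_a^i with b_0, …, b_n ∈ L. -/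
/-- The cyclic-algebra matrix `C_a`: entry `a` in position `(0, n)`, entries `1` in
positions `(i, i-1)` for `1 ≤ i ≤ n`, and `0` elsewhere. -/
def cyclicMat (L : Type*) [Field L] (n : ℕ) (a : L) :
    Matrix (Fin (n + 1)) (Fin (n + 1)) L :=
  fun i j => if (i : ℕ) = 0 ∧ (j : ℕ) = n then a
    else if (i : ℕ) = (j : ℕ) + 1 then 1 else 0

namespace CycAux

open Fin.CommRing Fin.NatCast

variable {L : Type*} [Field L] {n : ℕ}

def u (a : L) (j : Fin (n + 1)) : L := if (j : ℕ) = n then a else 1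

def Einv (a : L) : Matrix (Fin (n + 1)) (Fin (n + 1)) L :=
  fun i j => if j = i + 1 then (if (i : ℕ) = n then a⁻¹ else 1) else 0

lemma cmat_apply (a : L) (i j : Fin (n + 1)) :
    cyclicMat L n a i j = if i = j + 1 then u a j else 0 := by
  have hi := i.isLt
  rcases eq_or_ne (j : ℕ) n with hj | hj
  · have hj1 : j + 1 = 0 := by
      have : j = Fin.last n := Fin.ext hj
      subst this; simp
    rw [hj1]
    rcases eq_or_ne i 0 with hi0 | hi0
    · subst hi0; simp [cyclicMat, u, hj]
    · have h2 : (i : ℕ) ≠ 0 := fun h => hi0 (Fin.val_eq_zero_iff.mp h)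
      have h3 : (i : ℕ) ≠ (j : ℕ) + 1 := by omega
      simp only [cyclicMat, u, hj, Fin.ext_iff]
      simp [hi0, h2, h3]
      omega
  · have hj1 : ((j + 1 : Fin (n + 1)) : ℕ) = (j : ℕ) + 1 := by
      rw [Fin.val_add_one]
      simp only [Fin.ext_iff, Fin.val_last]
      simp [hj]
    simp [cyclicMat, u, hj, Fin.ext_iff, hj1, -Fin.val_eq_zero_iff]

lemma CE (a : L) (ha : a ≠ 0) : cyclicMat L n a * Einv a = 1 := by
  ext i j
  rw [Matrix.mul_apply, Finset.sum_eq_single (i - 1)]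
  · have hi : i - 1 + 1 = i := by ring
    rw [cmat_apply, if_pos hi.symm]
    show u a (i - 1) * (if j = i - 1 + 1 then (if ((i - 1 : Fin (n+1)) : ℕ) = n then a⁻¹ else 1) else 0) = _
    rw [hi, Matrix.one_apply]
    rcases eq_or_ne ((i - 1 : Fin (n + 1)) : ℕ) n with h2 | h2 <;>
      rcases eq_or_ne i j with h | h
    · subst h; simp [u, h2, mul_inv_cancel₀ ha]
    · simp [u, h2, h, h.symm]
    · subst h; simp [u, h2]
    · simp [u, h2, h, h.symm]
  · intro m _ hm
    rw [cmat_apply, if_neg, zero_mul]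
    intro hc
    exact hm (by rw [hc]; ring)
  · simp

lemma EC (a : L) (ha : a ≠ 0) : Einv a * cyclicMat L n a = 1 := by
  ext i j
  rw [Matrix.mul_apply, Finset.sum_eq_single (i + 1)]
  · show (if (i:Fin (n+1)) + 1 = i + 1 then (if (i : ℕ) = n then a⁻¹ else 1) else 0) * _ = _
    rw [if_pos rfl, cmat_apply, Matrix.one_apply]
    have : i + 1 = j + 1 ↔ i = j := by
      constructor
      · intro h; have := congrArg (· - 1) h; simpa using this
      · intro h; rw [h]
    rcases eq_or_ne i j with h | h
    · subst h
      rw [if_pos rfl]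
      rcases eq_or_ne (i : ℕ) n with h2 | h2 <;> simp [u, h2, inv_mul_cancel₀ ha]
    · rw [if_neg (fun hc => h (this.mp hc)), if_neg h, mul_zero]
  · intro m _ hm
    show (if m = i + 1 then _ else 0) * _ = 0
    rw [if_neg hm, zero_mul]
  · simp

lemma cmat_inv (a : L) (ha : a ≠ 0) : (cyclicMat L n a)⁻¹ = Einv a :=
  Matrix.inv_eq_right_inv (CE a ha)


lemma cmat_pow_apply (a : L) (m : ℕ) (hm : m ≤ n) (r c : Fin (n + 1)) :
    (cyclicMat L n a ^ m) r c
      = if r = c + (m : Fin (n + 1)) then (if n < (c : ℕ) + m then a else 1) else 0 := by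
  induction m generalizing c with
  | zero =>
      have h0 : ¬ n < (c : ℕ) := by have := c.isLt; omega
      simp [Matrix.one_apply, h0]
  | succ m ih =>
      rw [pow_succ, Matrix.mul_apply, Finset.sum_eq_single (c + 1)]
      · rw [cmat_apply, if_pos rfl, ih (by omega) (c + 1)]
        have hcast : ((m + 1 : ℕ) : Fin (n + 1)) = (m : Fin (n + 1)) + 1 := by push_cast; ring
        have hadd : c + 1 + (m : Fin (n + 1)) = c + ((m + 1 : ℕ) : Fin (n + 1)) := by
          rw [hcast]; ring
        rw [hadd]
        rcases eq_or_ne (c : ℕ) n with h | h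
        · have hc1 : ((c + 1 : Fin (n + 1)) : ℕ) = 0 := by
            have : c = Fin.last n := Fin.ext h
            subst this; simp
          have e1 : ¬ n < ((c + 1 : Fin (n + 1)) : ℕ) + m := by omega
          have e2 : n < (c : ℕ) + (m + 1) := by omega
          simp [u, h, e1, e2, ite_mul]
        · have hc1 : ((c + 1 : Fin (n + 1)) : ℕ) = (c : ℕ) + 1 := by
            rw [Fin.val_add_one]
            simp only [Fin.ext_iff, Fin.val_last]
            simp [h]
          have e : (n < ((c + 1 : Fin (n + 1)) : ℕ) + m) ↔ (n < (c : ℕ) + (m + 1)) := by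
            rw [hc1]; omega
          simp [u, h, e]
      · intro t _ ht
        rw [cmat_apply, if_neg ht, mul_zero]
      · simp

lemma cmat_pow_apply' (a : L) (i r c : Fin (n + 1)) :
    (cyclicMat L n a ^ (i : ℕ)) r c
      = if r = c + i then (if n < (c : ℕ) + (i : ℕ) then a else 1) else 0 := by
  rw [cmat_pow_apply a i (by omega) r c, Fin.cast_val_eq_self]

lemma sub_val (r c : Fin (n + 1)) :
    ((r - c : Fin (n + 1)) : ℕ) = if (r : ℕ) < (c : ℕ) then (r : ℕ) + (n + 1) - (c : ℕ) else (r : ℕ) - (c : ℕ) := by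
  rw [Fin.sub_def]
  simp only []
  have hr := r.isLt; have hc := c.isLt
  rcases Nat.lt_or_ge (r : ℕ) (c : ℕ) with h | h
  · rw [if_pos h, Nat.mod_eq_of_lt (by omega)]
    omega
  · rw [if_neg (by omega)]
    have : (n + 1 - (c:ℕ) + (r:ℕ)) = ((r:ℕ) - (c:ℕ)) + (n + 1) := by omega
    rw [this, Nat.add_mod_right, Nat.mod_eq_of_lt (by omega)]

lemma eps_iff (r c : Fin (n + 1)) :
    (n < (c : ℕ) + ((r - c : Fin (n + 1)) : ℕ)) ↔ (r : ℕ) < (c : ℕ) := by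
  rw [sub_val]
  have hr := r.isLt; have hc := c.isLt
  rcases Nat.lt_or_ge (r : ℕ) (c : ℕ) with h | h
  · rw [if_pos h]; omega
  · rw [if_neg (by omega)]; omega


section withk
variable {k : Type*} [Field k] [Algebra k L]

/-- the canonical candidate sum -/
def Phi (a : L) (σ : L ≃ₐ[k] L) (b : Fin (n + 1) → L) :
    Matrix (Fin (n + 1)) (Fin (n + 1)) L :=
  ∑ i : Fin (n + 1),
    Matrix.diagonal (fun j : Fin (n + 1) => (σ ^ (j : ℕ)) (b i)) * cyclicMat L n a ^ (i : ℕ)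

lemma Phi_apply (a : L) (σ : L ≃ₐ[k] L) (b : Fin (n + 1) → L) (r c : Fin (n + 1)) :
    Phi a σ b r c
      = (if (r : ℕ) < (c : ℕ) then a else 1) * (σ ^ (r : ℕ)) (b (r - c)) := by
  unfold Phi
  rw [Matrix.sum_apply]
  have key : ∀ i : Fin (n + 1),
      (Matrix.diagonal (fun j : Fin (n + 1) => (σ ^ (j : ℕ)) (b i)) * cyclicMat L n a ^ (i : ℕ)) r c
        = if i = r - c then (if (r : ℕ) < (c : ℕ) then a else 1) * (σ ^ (r : ℕ)) (b i) else 0 := by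
    intro i
    rw [Matrix.diagonal_mul, cmat_pow_apply']
    have hcond : (r = c + i) ↔ (i = r - c) := by
      constructor
      · intro h; rw [h]; ring
      · intro h; rw [h]; ring
    rcases eq_or_ne i (r - c) with h | h
    · rw [if_pos h, if_pos (hcond.mpr h)]
      subst h
      rw [mul_comm]
      congr 1
      rcases Nat.lt_or_ge (r : ℕ) (c : ℕ) with h2 | h2
      · rw [if_pos ((eps_iff r c).mpr h2), if_pos h2]
      · rw [if_neg (by rw [eps_iff]; omega), if_neg (by omega)]
    · rw [if_neg h, if_neg (fun hc => h (hcond.mp hc)), mul_zero]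
  rw [Finset.sum_congr rfl (fun i _ => key i), Finset.sum_ite_eq' _ (r - c), if_pos (Finset.mem_univ _)]



lemma mul_cmat_apply (a : L) (M : Matrix (Fin (n + 1)) (Fin (n + 1)) L) (r c : Fin (n + 1)) :
    (M * cyclicMat L n a) r c = M r (c + 1) * u a c := by
  rw [Matrix.mul_apply, Finset.sum_eq_single (c + 1)]
  · rw [cmat_apply, if_pos rfl]
  · intro t _ ht; rw [cmat_apply, if_neg ht, mul_zero]
  · simp

lemma cmat_mul_apply (a : L) (M : Matrix (Fin (n + 1)) (Fin (n + 1)) L) (r c : Fin (n + 1)) :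
    (cyclicMat L n a * M) r c = u a (r - 1) * M (r - 1) c := by
  rw [Matrix.mul_apply, Finset.sum_eq_single (r - 1)]
  · rw [cmat_apply, if_pos (by ring : r = r - 1 + 1)]
  · intro t _ ht; rw [cmat_apply, if_neg (fun hc => ht (by rw [hc]; ring)), zero_mul]
  · simp

lemma map_mul_eq (σ : L ≃ₐ[k] L) (M N : Matrix (Fin (n + 1)) (Fin (n + 1)) L) :
    (M * N).map ⇑σ = M.map ⇑σ * N.map ⇑σ := by
  ext i j; simp [Matrix.map_apply, Matrix.mul_apply, map_sum]

def AA (a : L) (ha : a ≠ 0) (σ : L ≃ₐ[k] L) :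
    Subalgebra k (Matrix (Fin (n + 1)) (Fin (n + 1)) L) where
  carrier := {M | cyclicMat L n a * M.map ⇑σ * (cyclicMat L n a)⁻¹ = M}
  mul_mem' := by
    intro M N hM hN
    simp only [Set.mem_setOf_eq, cmat_inv a ha] at *
    rw [map_mul_eq]
    have key : cyclicMat L n a * (M.map ⇑σ * N.map ⇑σ) * Einv a
        = (cyclicMat L n a * M.map ⇑σ * Einv a) * (cyclicMat L n a * N.map ⇑σ * Einv a) := by
      rw [show (cyclicMat L n a * M.map ⇑σ * Einv a) * (cyclicMat L n a * N.map ⇑σ * Einv a)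
          = cyclicMat L n a * (M.map ⇑σ * ((Einv a * cyclicMat L n a) * (N.map ⇑σ * Einv a)))
        from by simp only [Matrix.mul_assoc], EC a ha, Matrix.one_mul]
      simp only [Matrix.mul_assoc]
    rw [key, hM, hN]
  one_mem' := by
    simp only [Set.mem_setOf_eq, cmat_inv a ha]
    rw [Matrix.map_one ⇑σ (map_zero σ) (map_one σ), Matrix.mul_one, CE a ha]
  zero_mem' := by
    simp only [Set.mem_setOf_eq]
    have : (0 : Matrix (Fin (n + 1)) (Fin (n + 1)) L).map ⇑σ = 0 := by
      ext i j; simp [Matrix.map_apply]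
    rw [this, Matrix.mul_zero, Matrix.zero_mul]
  add_mem' := by
    intro M N hM hN
    simp only [Set.mem_setOf_eq] at *
    have : (M + N).map ⇑σ = M.map ⇑σ + N.map ⇑σ := by
      ext i j; simp [Matrix.map_apply]
    rw [this, Matrix.mul_add, Matrix.add_mul, hM, hN]
  algebraMap_mem' := by
    intro r
    simp only [Set.mem_setOf_eq, cmat_inv a ha]
    have h1 : (algebraMap k (Matrix (Fin (n + 1)) (Fin (n + 1)) L) r).map ⇑σ
        = algebraMap k (Matrix (Fin (n + 1)) (Fin (n + 1)) L) r := by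
      ext i j
      rw [Matrix.map_apply, Matrix.algebraMap_eq_diagonal]
      rcases eq_or_ne i j with h | h
      · subst h
        rw [Matrix.diagonal_apply_eq]
        exact σ.commutes r
      · rw [Matrix.diagonal_apply_ne _ h]
        exact map_zero σ
    rw [h1, ← Algebra.commutes r (cyclicMat L n a), Matrix.mul_assoc, CE a ha, Matrix.mul_one]

lemma mem_AA_iff (a : L) (ha : a ≠ 0) (σ : L ≃ₐ[k] L)
    (M : Matrix (Fin (n + 1)) (Fin (n + 1)) L) :
    M ∈ AA a ha σ ↔ cyclicMat L n a * M.map ⇑σ * (cyclicMat L n a)⁻¹ = M := Iff.rfl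

lemma cmat_mem (a : L) (ha : a ≠ 0) (σ : L ≃ₐ[k] L) (haσ : σ a = a) :
    cyclicMat L n a ∈ AA a ha σ := by
  rw [mem_AA_iff]
  have hmap : (cyclicMat L n a).map ⇑σ = cyclicMat L n a := by
    ext i j
    rw [Matrix.map_apply, cmat_apply, apply_ite ⇑σ, map_zero]
    simp [u, apply_ite ⇑σ, haσ]
  rw [hmap, cmat_inv a ha, Matrix.mul_assoc, CE a ha, Matrix.mul_one]

lemma diag_mem (a : L) (ha : a ≠ 0) (σ : L ≃ₐ[k] L) (haσ : σ a = a)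
    (hord : σ ^ (n + 1) = 1) (b : L) :
    Matrix.diagonal (fun j : Fin (n + 1) => (σ ^ (j : ℕ)) b) ∈ AA a ha σ := by
  rw [mem_AA_iff]
  set d : Fin (n + 1) → L := fun j => (σ ^ (j : ℕ)) b with hd
  have hmap : (Matrix.diagonal d).map ⇑σ = Matrix.diagonal (fun j => σ (d j)) :=
    Matrix.diagonal_map (map_zero σ)
  have key : cyclicMat L n a * Matrix.diagonal (fun j => σ (d j))
      = Matrix.diagonal d * cyclicMat L n a := by
    ext r c
    rw [Matrix.mul_diagonal, Matrix.diagonal_mul, cmat_apply]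
    rcases eq_or_ne r (c + 1) with h | h
    · rw [if_pos h, mul_comm (d r)]
      congr 1
      subst h
      rcases eq_or_ne (c : ℕ) n with hc | hc
      · have h0 : (c + 1 : Fin (n + 1)) = 0 := by
          have : c = Fin.last n := Fin.ext hc
          subst this; simp
        have e1 : σ (d c) = (σ ^ (n + 1)) b := by
          rw [pow_succ']
          simp only [hd, hc]
          rfl
        rw [e1, hord, h0]
        simp [hd]
      · have hc1 : ((c + 1 : Fin (n + 1)) : ℕ) = (c : ℕ) + 1 := by
          rw [Fin.val_add_one]
          simp only [Fin.ext_iff, Fin.val_last]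
          simp [hc]
        have e1 : σ (d c) = (σ ^ ((c : ℕ) + 1)) b := by
          rw [pow_succ']; rfl
        rw [e1, hd]
        simp only [hc1]
    · rw [if_neg h, zero_mul, mul_zero]
  rw [hmap, cmat_inv a ha, key, Matrix.mul_assoc, CE a ha, Matrix.mul_one]

lemma Phi_mem (a : L) (ha : a ≠ 0) (σ : L ≃ₐ[k] L) (haσ : σ a = a)
    (hord : σ ^ (n + 1) = 1) (b : Fin (n + 1) → L) :
    Phi a σ b ∈ AA a ha σ := by
  unfold Phi
  exact Subalgebra.sum_mem _ fun i _ =>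
    mul_mem (diag_mem a ha σ haσ hord (b i)) (pow_mem (cmat_mem a ha σ haσ) _)

lemma rel_of_mem (a : L) (ha : a ≠ 0) (σ : L ≃ₐ[k] L)
    (M : Matrix (Fin (n + 1)) (Fin (n + 1)) L) (hM : M ∈ AA a ha σ) :
    ∀ r c, u a (r - 1) * σ (M (r - 1) c) = M r (c + 1) * u a c := by
  rw [mem_AA_iff, cmat_inv a ha] at hM
  have h2 : cyclicMat L n a * M.map ⇑σ = M * cyclicMat L n a := by
    calc cyclicMat L n a * M.map ⇑σ
        = cyclicMat L n a * M.map ⇑σ * (Einv a * cyclicMat L n a) := by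
          rw [EC a ha, Matrix.mul_one]
      _ = (cyclicMat L n a * M.map ⇑σ * Einv a) * cyclicMat L n a := by
          simp only [Matrix.mul_assoc]
      _ = M * cyclicMat L n a := by rw [hM]
  intro r c
  have h3 := congrFun (congrFun h2 r) c
  rw [cmat_mul_apply, mul_cmat_apply, Matrix.map_apply] at h3
  exact h3



def bfun (a : L) (M : Matrix (Fin (n + 1)) (Fin (n + 1)) L) (i : Fin (n + 1)) : L :=
  (if i = 0 then 1 else a⁻¹) * M 0 (-i)

lemma Phi_inj (a : L) (σ : L ≃ₐ[k] L) : Function.Injective (Phi (n := n) a σ) := by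
  intro b b' h
  funext i
  have h2 := congrFun (congrFun h i) 0
  rw [Phi_apply, Phi_apply] at h2
  have h3 : ¬ ((i : ℕ) < ((0 : Fin (n + 1)) : ℕ)) := by simp
  rw [if_neg h3, one_mul, one_mul, sub_zero] at h2
  exact (σ ^ (i : ℕ)).injective h2

lemma val_one_fin (hn : 1 ≤ n) : ((1 : Fin (n + 1)) : ℕ) = 1 := by
  rw [Fin.val_one']
  exact Nat.mod_eq_of_lt (by omega)

lemma rows (a : L) (ha : a ≠ 0) (hn : 1 ≤ n) (σ : L ≃ₐ[k] L) (haσ : σ a = a)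
    (M : Matrix (Fin (n + 1)) (Fin (n + 1)) L)
    (hrel : ∀ r c, u a (r - 1) * σ (M (r - 1) c) = M r (c + 1) * u a c) :
    ∀ r c, M r c = (if (r : ℕ) < (c : ℕ) then a else 1) * (σ ^ (r : ℕ)) (bfun a M (r - c)) := by
  intro r
  induction r using Fin.induction with
  | zero =>
      intro c
      rcases eq_or_ne c 0 with h | h
      · subst h; simp [bfun]
      · have h1 : ((0 : Fin (n + 1)) : ℕ) < (c : ℕ) := by
          simp only [Fin.val_zero]
          exact Nat.pos_of_ne_zero (fun hc => h (Fin.ext hc))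
        have h3 : (-c : Fin (n + 1)) ≠ 0 := by simpa [neg_eq_zero] using h
        rw [if_pos h1, zero_sub, Fin.val_zero, pow_zero]
        simp only [bfun, if_neg h3, neg_neg, AlgEquiv.one_apply]
        rw [← mul_assoc, mul_inv_cancel₀ ha, one_mul]
  | succ i ih =>
      intro c
      have hs : i.succ - 1 = i.castSucc := by rw [← Fin.coeSucc_eq_succ]; ring
      have hc1 : (c - 1) + 1 = c := by ring
      have hrc := hrel i.succ (c - 1)
      rw [hs, hc1] at hrc
      have hilt := i.isLt
      have hu1 : u a i.castSucc = 1 := by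
        have h2 : (i : ℕ) ≠ n := by omega
        simp [u, h2]
      rw [hu1, one_mul, ih (c - 1), map_mul] at hrc
      have hfix : σ (if ((i.castSucc : Fin (n+1)) : ℕ) < ((c - 1 : Fin (n + 1)) : ℕ) then a else 1)
          = (if ((i.castSucc : Fin (n+1)) : ℕ) < ((c - 1 : Fin (n + 1)) : ℕ) then a else 1) := by
        split_ifs <;> simp [haσ]
      rw [hfix] at hrc
      have harg : i.castSucc - (c - 1) = i.succ - c := by rw [← Fin.coeSucc_eq_succ]; ring
      have hpow : σ ((σ ^ ((i.castSucc : Fin (n+1)) : ℕ)) (bfun a M (i.castSucc - (c - 1))))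
          = (σ ^ ((i.succ : Fin (n+1)) : ℕ)) (bfun a M (i.succ - c)) := by
        rw [harg, Fin.val_succ, Fin.coe_castSucc, pow_succ']
        rfl
      rw [hpow] at hrc
      rcases eq_or_ne c 0 with h | h
      · subst h
        have hv1 : ((1 : Fin (n + 1)) : ℕ) = 1 := val_one_fin hn
        have hneg : ((0 - 1 : Fin (n + 1)) : ℕ) = n := by
          rw [sub_val, Fin.val_zero, hv1]
          simp
        have hu : u a (0 - 1 : Fin (n + 1)) = a := by simp [u, hneg]
        have heps : ((i.castSucc : Fin (n + 1)) : ℕ) < ((0 - 1 : Fin (n + 1)) : ℕ) := by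
          rw [hneg, Fin.coe_castSucc]; omega
        rw [hu, if_pos heps] at hrc
        have hg : ¬ ((i.succ : Fin (n + 1)) : ℕ) < ((0 : Fin (n + 1)) : ℕ) := by simp
        rw [if_neg hg, one_mul]
        have := mul_left_cancel₀ ha (hrc.trans (mul_comm _ a))
        exact this.symm
      · have hv1 : ((1 : Fin (n + 1)) : ℕ) = 1 := val_one_fin hn
        have hcpos : 0 < (c : ℕ) := Nat.pos_of_ne_zero (fun hc => h (Fin.ext hc))
        have hclt := c.isLt
        have hcv : ((c - 1 : Fin (n + 1)) : ℕ) = (c : ℕ) - 1 := by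
          rw [sub_val, hv1, if_neg (by omega)]
        have hu : u a (c - 1) = 1 := by
          have h2 : ((c - 1 : Fin (n + 1)) : ℕ) ≠ n := by rw [hcv]; omega
          simp [u, h2]
        rw [hu, mul_one] at hrc
        have heps : (if ((i.castSucc : Fin (n + 1)) : ℕ) < ((c - 1 : Fin (n + 1)) : ℕ) then a else 1)
            = (if ((i.succ : Fin (n + 1)) : ℕ) < (c : ℕ) then a else 1) := by
          have h3 : (((i.castSucc : Fin (n + 1)) : ℕ) < ((c - 1 : Fin (n + 1)) : ℕ))
              ↔ (((i.succ : Fin (n + 1)) : ℕ) < (c : ℕ)) := by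
            rw [hcv, Fin.coe_castSucc, Fin.val_succ]; omega
          exact if_congr h3 rfl rfl
        rw [heps] at hrc
        exact hrc.symm



lemma surj (a : L) (ha : a ≠ 0) (hn : 1 ≤ n) (σ : L ≃ₐ[k] L) (haσ : σ a = a)
    (M : Matrix (Fin (n + 1)) (Fin (n + 1)) L) (hM : M ∈ AA a ha σ) :
    Phi a σ (bfun a M) = M := by
  ext r c
  rw [Phi_apply]
  exact (rows a ha hn σ haσ M (rel_of_mem a ha σ M hM) r c).symm

def PhiL (a : L) (σ : L ≃ₐ[k] L) :
    (Fin (n + 1) → L) →ₗ[k] Matrix (Fin (n + 1)) (Fin (n + 1)) L where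
  toFun := Phi a σ
  map_add' b b' := by
    ext r c
    simp only [Phi_apply, Pi.add_apply, map_add, Matrix.add_apply, mul_add]
  map_smul' t b := by
    ext r c
    simp only [Phi_apply, Pi.smul_apply, RingHom.id_apply, Matrix.smul_apply]
    rw [map_smul, mul_smul_comm]

end withk
end CycAux

/-- Let `L/k` be a cyclic Galois extension of degree `n+1` with generator `σ`, and
`a ∈ kˣ`.  The set `A_a = {M : C_a · σ(M) · C_a⁻¹ = M}` is a `k`-subalgebra of
`M_{n+1}(L)` of `k`-dimension `(n+1)²`, and every element of it is uniquely of the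
form `∑ᵢ S_{bᵢ} · C_aⁱ` with `bᵢ ∈ L`, where `S_b = diag(b, σ(b), …, σⁿ(b))`. -/
theorem cyclic_algebra_subalgebra_dimension_basis
    (k L : Type*) [Field k] [Field L] [Algebra k L]
    [FiniteDimensional k L] [IsGalois k L]
    (n : ℕ) (hn : 1 ≤ n) (hdeg : Module.finrank k L = n + 1)
    (σ : L ≃ₐ[k] L) (hσ : ∀ τ : L ≃ₐ[k] L, τ ∈ Subgroup.zpowers σ)
    (a : k) (ha : a ≠ 0) :
    ∃ S : Subalgebra k (Matrix (Fin (n + 1)) (Fin (n + 1)) L),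
      (S : Set (Matrix (Fin (n + 1)) (Fin (n + 1)) L))
        = {M | cyclicMat L n (algebraMap k L a) * M.map σ *
                (cyclicMat L n (algebraMap k L a))⁻¹ = M} ∧
      Module.finrank k S = (n + 1) ^ 2 ∧
      ∀ M ∈ S, ∃! b : Fin (n + 1) → L,
        M = ∑ i : Fin (n + 1),
          Matrix.diagonal (fun j : Fin (n + 1) => (σ ^ (j : ℕ)) (b i)) *
            cyclicMat L n (algebraMap k L a) ^ (i : ℕ) := by
  have ha' : algebraMap k L a ≠ 0 := by simpa using ha
  have haσ : σ (algebraMap k L a) = algebraMap k L a := σ.commutes a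
  have hord : σ ^ (n + 1) = 1 := by
    have h1 : orderOf σ = n + 1 := by
      rw [orderOf_eq_card_of_forall_mem_zpowers hσ,
        IsGalois.card_aut_eq_finrank, hdeg]
    rw [← h1, pow_orderOf_eq_one]
  refine ⟨CycAux.AA (n := n) (algebraMap k L a) ha' σ, rfl, ?_, ?_⟩
  · -- dimension
    have hinj : Function.Injective (CycAux.PhiL (n := n) (algebraMap k L a) σ) :=
      CycAux.Phi_inj (algebraMap k L a) σ
    have hrange : Subalgebra.toSubmodule (CycAux.AA (n := n) (algebraMap k L a) ha' σ)
        = LinearMap.range (CycAux.PhiL (n := n) (algebraMap k L a) σ) := by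
      ext M
      simp only [Subalgebra.mem_toSubmodule, LinearMap.mem_range]
      constructor
      · intro hM
        exact ⟨CycAux.bfun (algebraMap k L a) M,
          CycAux.surj (algebraMap k L a) ha' hn σ haσ M hM⟩
      · rintro ⟨b, rfl⟩
        exact CycAux.Phi_mem (algebraMap k L a) ha' σ haσ hord b
    have h1 : Module.finrank k (CycAux.AA (n := n) (algebraMap k L a) ha' σ)
        = Module.finrank k (LinearMap.range (CycAux.PhiL (n := n) (algebraMap k L a) σ)) := by
      rw [← hrange]; rfl
    rw [h1, LinearMap.finrank_range_of_inj hinj, Module.finrank_pi_fintype,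
      Finset.sum_const, Finset.card_univ, Fintype.card_fin, hdeg, smul_eq_mul, sq]
  · -- uniqueness
    intro M hM
    refine ⟨CycAux.bfun (algebraMap k L a) M,
      (CycAux.surj (algebraMap k L a) ha' hn σ haσ M hM).symm, ?_⟩
    intro b' hb'
    exact CycAux.Phi_inj (algebraMap k L a) σ
      (hb'.symm.trans (CycAux.surj (algebraMap k L a) ha' hn σ haσ M hM).symm)
end

section
/- Let β ∈ kˣ and suppose β is not a norm from L, i.e., there is no x ∈ Lˣ with N_{L/k}(x) = β. Then there exist no matrix P ∈ GL_{n+1}(L) and no scalar λ ∈ Lˣ such that C_β = λ·P·σ(P)⁻¹, where σ(P) denotes the matrix obtained from P by applying σ to each entry. (Equivalently, the 1-cocycle sending σ to the class of C_β represents a non-trivial class in H¹(Gal(L/k), PGL_{n+1}(L)).) -/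
lemma cyclicMat_pow_apply (L : Type*) [Field L] (n : ℕ) (a : L) :
    ∀ m : ℕ, m ≤ n + 1 → ∀ i j : Fin (n + 1),
      (cyclicMat L n a ^ m) i j =
        if (i : ℕ) + (n + 1) = (j : ℕ) + m then a
        else if (i : ℕ) = (j : ℕ) + m then 1 else 0 := by
  intro m
  induction m with
  | zero =>
    intro _ i j
    have hi := i.isLt; have hj := j.isLt
    rw [pow_zero, Matrix.one_apply,
      if_neg (show ¬((i : ℕ) + (n + 1) = (j : ℕ) + 0) by omega)]
    simp [Fin.ext_iff]
  | succ m ih =>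
    intro hm i j
    rw [pow_succ, Matrix.mul_apply]
    by_cases hj : (j : ℕ) = n
    · rw [Finset.sum_eq_single (0 : Fin (n + 1))]
      · rw [ih (by omega)]
        have h0 : cyclicMat L n a 0 j = a := by
          simp [cyclicMat, hj]
        rw [h0]
        have hi := i.isLt
        split_ifs <;> simp only [Fin.val_mk, Fin.val_zero] at * <;> first | (exfalso; omega) | ring
      · intro l _ hl
        have hl' : (l : ℕ) ≠ 0 := by
          intro h; exact hl (Fin.ext (by simp [h]))
        have hll := l.isLt
        have : cyclicMat L n a l j = 0 := by
          simp only [cyclicMat]; rw [if_neg (by omega), if_neg (by omega)]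
        rw [this, mul_zero]
      · intro h; exact absurd (Finset.mem_univ _) h
    · have hjlt : (j : ℕ) + 1 < n + 1 := by have := j.isLt; omega
      rw [Finset.sum_eq_single (⟨(j : ℕ) + 1, hjlt⟩ : Fin (n + 1))]
      · rw [ih (by omega)]
        have h0 : cyclicMat L n a ⟨(j : ℕ) + 1, hjlt⟩ j = 1 := by
          simp [cyclicMat, hj]
        rw [h0, mul_one]
        have hi := i.isLt
        split_ifs <;> simp only [Fin.val_mk, Fin.val_zero] at * <;> first | (exfalso; omega) | ring
      · intro l _ hl
        have hll := l.isLt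
        have : cyclicMat L n a l j = 0 := by
          simp only [cyclicMat]
          rw [if_neg (by omega), if_neg (by intro h; exact hl (Fin.ext (by simpa using h)))]
        rw [this, mul_zero]
      · intro h; exact absurd (Finset.mem_univ _) h

lemma matMapMul {L : Type*} [Field L] {n : ℕ} (f : L →+* L)
    (M N : Matrix (Fin (n+1)) (Fin (n+1)) L) :
    (M * N).map ⇑f = M.map ⇑f * N.map ⇑f := by
  ext i j
  simp [Matrix.map_apply, Matrix.mul_apply, map_sum]

/-- Let `L/k` be a cyclic Galois extension of degree `n+1` with generator `σ`, and let
`β ∈ kˣ` not be a norm from `L`.  Then there are no `P ∈ GL_{n+1}(L)` and `λ ∈ Lˣ`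
with `C_β = λ · P · σ(P)⁻¹`; i.e. the 1-cocycle `σ ↦ [C_β]` is a non-trivial class in
`H¹(Gal(L/k), PGL_{n+1}(L))`. -/
theorem cocycle_nontrivial_of_not_norm
    (k L : Type*) [Field k] [Field L] [Algebra k L]
    [FiniteDimensional k L] [IsGalois k L]
    (n : ℕ) (hn : 1 ≤ n) (hdeg : Module.finrank k L = n + 1)
    (σ : L ≃ₐ[k] L) (hσ : ∀ τ : L ≃ₐ[k] L, τ ∈ Subgroup.zpowers σ)
    (β : k) (hβ : β ≠ 0)
    (hnotnorm : ¬ ∃ x : L, x ≠ 0 ∧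
      (∏ j ∈ Finset.range (n + 1), (σ ^ j) x) = algebraMap k L β) :
    ¬ ∃ (P : Matrix (Fin (n + 1)) (Fin (n + 1)) L) (lam : L),
        IsUnit P ∧ lam ≠ 0 ∧
        cyclicMat L n (algebraMap k L β) = lam • (P * (P.map σ)⁻¹) := by
  rintro ⟨P, lam, hP, hlam, heq⟩
  set C := cyclicMat L n (algebraMap k L β) with hCdef
  have hdetP : IsUnit P.det := (Matrix.isUnit_iff_isUnit_det P).mp hP
  have hcard : Fintype.card (L ≃ₐ[k] L) = n + 1 := by
    rw [← Nat.card_eq_fintype_card, IsGalois.card_aut_eq_finrank, hdeg]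
  have hσpow : σ ^ (n + 1) = 1 := by rw [← hcard]; exact pow_card_eq_one
  -- C is fixed entrywise by every automorphism
  have hCfix : ∀ τ : L ≃ₐ[k] L, C.map ⇑τ = C := by
    intro τ
    ext i j
    simp only [Matrix.map_apply, hCdef, cyclicMat]
    split_ifs <;> simp [AlgEquiv.commutes]
  have hdetσ : (P.map ⇑σ).det = σ P.det := by
    simpa [RingHom.mapMatrix_apply] using (RingHom.map_det (σ : L →+* L) P).symm
  have hdetQ : IsUnit (P.map ⇑σ).det := by
    rw [hdetσ]
    exact isUnit_iff_ne_zero.mpr (by simpa using isUnit_iff_ne_zero.mp hdetP)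
  have hbase : C * P.map ⇑σ = lam • P := by
    rw [heq, Matrix.smul_mul, Matrix.mul_assoc, Matrix.nonsing_inv_mul _ hdetQ,
      Matrix.mul_one]
  have hmul : ∀ (τ : L ≃ₐ[k] L) (M N : Matrix (Fin (n+1)) (Fin (n+1)) L),
      (M * N).map ⇑τ = M.map ⇑τ * N.map ⇑τ := by
    intro τ M N; ext i j
    simp [Matrix.map_apply, Matrix.mul_apply, map_sum]
  have hmapid : ∀ Q : Matrix (Fin (n+1)) (Fin (n+1)) L,
      Q.map ⇑(1 : L ≃ₐ[k] L) = Q := by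
    intro Q; ext i j; simp
  have key : ∀ m : ℕ,
      C ^ m * P.map ⇑(σ ^ m) = (∏ j ∈ Finset.range m, (σ ^ j) lam) • P := by
    intro m
    induction m with
    | zero => simp [hmapid P]
    | succ m ih =>
      have hcomp : (P.map ⇑σ).map ⇑(σ ^ m) = P.map ⇑(σ ^ (m + 1)) := by
        ext i j
        simp [Matrix.map_apply, pow_succ, AlgEquiv.mul_apply]
      have hsm : (lam • P).map ⇑(σ ^ m) = (σ ^ m) lam • P.map ⇑(σ ^ m) := by
        ext i j; simp [Matrix.map_apply]
      have hstep : C * P.map ⇑(σ ^ (m + 1)) = (σ ^ m) lam • P.map ⇑(σ ^ m) := by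
        have h := congrArg (fun M => M.map ⇑(σ ^ m)) hbase
        rw [hmul (σ ^ m), hCfix, hcomp, hsm] at h
        exact h
      calc C ^ (m + 1) * P.map ⇑(σ ^ (m + 1))
          = C ^ m * (C * P.map ⇑(σ ^ (m + 1))) := by
            rw [pow_succ, Matrix.mul_assoc]
        _ = C ^ m * ((σ ^ m) lam • P.map ⇑(σ ^ m)) := by rw [hstep]
        _ = (σ ^ m) lam • (C ^ m * P.map ⇑(σ ^ m)) := by
            rw [Matrix.mul_smul]
        _ = (σ ^ m) lam • ((∏ j ∈ Finset.range m, (σ ^ j) lam) • P) := by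
            rw [ih]
        _ = (∏ j ∈ Finset.range (m + 1), (σ ^ j) lam) • P := by
            rw [smul_smul, Finset.prod_range_succ, mul_comm]
  have hCpow : C ^ (n + 1) = algebraMap k L β • (1 : Matrix (Fin (n+1)) (Fin (n+1)) L) := by
    ext i j
    rw [hCdef, cyclicMat_pow_apply L n _ (n + 1) le_rfl]
    have hi := i.isLt
    by_cases h : i = j
    · subst h
      rw [if_pos rfl, Matrix.smul_apply, Matrix.one_apply_eq, smul_eq_mul, mul_one]
    · rw [if_neg (by simp only [Fin.ext_iff] at h; omega),
        if_neg (by omega), Matrix.smul_apply, Matrix.one_apply_ne h, smul_eq_mul, mul_zero]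
  have hfin := key (n + 1)
  rw [hCpow, hσpow, hmapid P, Matrix.smul_mul, Matrix.one_mul] at hfin
  have hPP : P * P⁻¹ = 1 := Matrix.mul_nonsing_inv P hdetP
  have h2 := congrArg (fun M => M * P⁻¹) hfin
  simp only [Matrix.smul_mul, hPP] at h2
  have h3 := congrArg (fun M => M 0 0) h2
  simp only [Matrix.smul_apply, Matrix.one_apply_eq, smul_eq_mul, mul_one] at h3
  exact hnotnorm ⟨lam, hlam, h3.symm⟩
end

section
/- Let K/k be a Galois extension of fields with Galois group G acting entrywise on matrices over K, let m and n be positive integers, and let P ∈ GL_{n+1}(K). Suppose that for every σ ∈ G there exist a scalar λ_σ ∈ Kˣ and a diagonal matrix D_σ ∈ GL_{n+1}(K), all of whose diagonal entries are m-th roots of unity, such that σ(P) = λ_σ·P·D_σ, where σ(P) is obtained by applying σ to each entry of P. Then there exist a matrix M ∈ GL_{n+1}(k) and an invertible diagonal matrix D over K such that P = M·D (viewing M as a matrix over K). -/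
/-- An element of a Galois extension fixed by every automorphism lies in the base field. -/
lemma fixed_mem_range_algebraMap
    (k K : Type*) [Field k] [Field K] [Algebra k K] [IsGalois k K]
    (x : K) (hx : ∀ σ : K ≃ₐ[k] K, σ x = x) :
    ∃ c : k, algebraMap k K c = x := by
  classical
  have hint : IsIntegral k x := Algebra.IsIntegral.isIntegral x
  have halg : IsAlgebraic k x := hint.isAlgebraic
  set p := minpoly k x with hp
  set q := p.map (algebraMap k K) with hq
  have hq0 : q ≠ 0 := Polynomial.map_ne_zero (minpoly.ne_zero hint)
  have hsep : q.Separable := Polynomial.Separable.map (Algebra.IsSeparable.isSeparable k x)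
  have hnodup : q.roots.Nodup := Polynomial.nodup_roots hsep
  have hallx : ∀ r ∈ q.roots, x = r := by
    intro r hr
    have hroot : Polynomial.aeval r p = 0 := by
      have := Polynomial.isRoot_of_mem_roots hr
      rwa [Polynomial.IsRoot, hq, Polynomial.eval_map, ← Polynomial.aeval_def] at this
    obtain ⟨σ, hσ⟩ := minpoly.exists_algEquiv_of_root' halg hroot
    rw [← hσ, hx σ]
  have hcard : q.roots.card = q.natDegree := by
    have hsplits : Polynomial.Splits q := by
      rw [hq]
      exact IsGalois.to_normal.splits x
    exact (Polynomial.splits_iff_card_roots).mp hsplits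
  have hcount : q.roots.count x = q.roots.card := Multiset.count_eq_card.mpr hallx
  have hle : q.roots.card ≤ 1 := by
    rw [← hcount]
    exact (Multiset.nodup_iff_count_le_one.mp hnodup) x
  have hnd : p.natDegree ≤ 1 := by
    have : q.natDegree = p.natDegree := Polynomial.natDegree_map _
    omega
  have hdeg : p.degree = 1 := by
    have h1 : 0 < p.natDegree := minpoly.natDegree_pos hint
    have : p.natDegree = 1 := le_antisymm hnd h1
    rw [Polynomial.degree_eq_natDegree (minpoly.ne_zero hint), this]
    rfl
  obtain ⟨c, hc⟩ := (minpoly.degree_eq_one_iff).mp hdeg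
  exact ⟨c, hc⟩

/-- Let `K/k` be a Galois extension, and let `P ∈ GL_{n+1}(K)`.  If for every
`σ ∈ Gal(K/k)` one has `σ(P) = λ_σ · P · D_σ` for some scalar `λ_σ ∈ Kˣ` and some
diagonal matrix `D_σ` whose diagonal entries are `m`-th roots of unity, then
`P = M · D` for some `M ∈ GL_{n+1}(k)` and some invertible diagonal matrix `D`
over `K`. -/
theorem matrix_decomposes_as_rational_times_diagonal
    (k K : Type*) [Field k] [Field K] [Algebra k K] [IsGalois k K]
    (m n : ℕ) (hm : 0 < m)
    (P : Matrix (Fin (n + 1)) (Fin (n + 1)) K) (hP : IsUnit P)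
    (hcocycle : ∀ σ : K ≃ₐ[k] K, ∃ (lam : K) (v : Fin (n + 1) → K),
      lam ≠ 0 ∧ (∀ i, (v i) ^ m = 1) ∧
      P.map σ = lam • (P * Matrix.diagonal v)) :
    ∃ (M : Matrix (Fin (n + 1)) (Fin (n + 1)) k) (d : Fin (n + 1) → K),
      IsUnit M ∧ (∀ i, d i ≠ 0) ∧
      P = M.map (algebraMap k K) * Matrix.diagonal d := by
  have hdet : P.det ≠ 0 := by
    have := (Matrix.isUnit_iff_isUnit_det P).mp hP
    exact this.ne_zero
  have hcol : ∀ j, ∃ i, P i j ≠ 0 := by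
    intro j
    by_contra h
    push_neg at h
    exact hdet (Matrix.det_eq_zero_of_column_eq_zero j h)
  choose r hr using hcol
  set d : Fin (n + 1) → K := fun j => P (r j) j with hd
  have hdne : ∀ j, d j ≠ 0 := fun j => hr j
  have hfix : ∀ i j (σ : K ≃ₐ[k] K), σ (P i j / d j) = P i j / d j := by
    intro i j σ
    obtain ⟨lam, v, hlam, hv, hPσ⟩ := hcocycle σ
    have hvj : v j ≠ 0 := by
      intro h
      have := hv j
      rw [h, zero_pow hm.ne'] at this
      exact zero_ne_one this
    have key : ∀ a b : Fin (n + 1), σ (P a b) = lam * (P a b * v b) := by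
      intro a b
      have := congrFun (congrFun hPσ a) b
      simpa [Matrix.map_apply, Matrix.mul_diagonal, Matrix.smul_apply, smul_eq_mul] using this
    rw [map_div₀, key i j, key (r j) j]
    rw [mul_div_mul_left _ _ hlam, mul_div_mul_right _ _ hvj]
  have hmem : ∀ i j, ∃ c : k, algebraMap k K c = P i j / d j := by
    intro i j
    exact fixed_mem_range_algebraMap k K _ (fun σ => hfix i j σ)
  choose M hM using hmem
  have hPeq : P = (Matrix.of M).map (algebraMap k K) * Matrix.diagonal d := by
    ext i j
    rw [Matrix.mul_diagonal, Matrix.map_apply]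
    show P i j = algebraMap k K (M i j) * d j
    rw [hM i j, div_mul_cancel₀ _ (hdne j)]
  refine ⟨Matrix.of M, d, ?_, hdne, hPeq⟩
  rw [Matrix.isUnit_iff_isUnit_det, isUnit_iff_ne_zero]
  intro h0
  apply hdet
  rw [hPeq, Matrix.det_mul, ← RingHom.mapMatrix_apply, ← RingHom.map_det, h0, map_zero, zero_mul]
end

section
/- Let λ₀, β ∈ kˣ, α ∈ Lˣ and let d be a positive integer such that N_{L/k}(α) = λ₀^{n+1}·β^d. Define the polynomial F := λ₀·X₀^d + Σ_{i=1}^{n} (λ₀^{1−i}·∏_{j=0}^{i−1} σʲ(α))·X_i^d in L[X₀,…,X_n]. Then substituting X₀ ↦ β·X_n and X_i ↦ X_{i−1} for 1 ≤ i ≤ n into F yields (α/λ₀)·F^σ, where F^σ denotes the polynomial obtained from F by applying σ to its coefficients. (This says the matrix C_β defines an isomorphism from the hypersurface F = 0 onto its Galois conjugate F^σ = 0.) -/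
/-!
Write `F = ∑ᵢ aᵢ Xᵢ^d` with `aᵢ = λ₀^{1-i} ∏_{j<i} σʲ(α)` for `0 ≤ i ≤ n`. These coefficients
satisfy the recursion `a_{i+1} = (α/λ₀) σ(aᵢ)`, and the norm condition says exactly that the
next term `a_{n+1} = λ₀^{-n} N(α)` equals `β^d a₀`. The substitution shifts the coefficients of a
diagonal form down by one index, turning `X₀^d` into `β^d Xₙ^d`, so it sends `F` to
`∑ᵢ a_{i+1} Xᵢ^d = ∑ᵢ (α/λ₀) σ(aᵢ) Xᵢ^d = (α/λ₀) F^σ`.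
-/

open MvPolynomial Finset

namespace MvPolynomial

variable {ι R : Type*} [Fintype ι] [CommSemiring R]

noncomputable def diagonalForm (c : ι → R) (d : ℕ) : MvPolynomial ι R :=
  ∑ i, C (c i) * X i ^ d

theorem C_mul_diagonalForm (r : R) (c : ι → R) (d : ℕ) :
    C r * diagonalForm c d = diagonalForm (fun i => r * c i) d := by
  simp only [diagonalForm, Finset.mul_sum, C_mul, mul_assoc]

theorem map_diagonalForm {S : Type*} [CommSemiring S] (f : R →+* S) (c : ι → R) (d : ℕ) :
    map f (diagonalForm c d) = diagonalForm (fun i => f (c i)) d := by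
  simp [diagonalForm]

theorem diagonalForm_fin_succ {n : ℕ} (c : Fin (n + 1) → R) (d : ℕ) :
    diagonalForm c d = C (c 0) * X 0 ^ d + ∑ i : Fin n, C (c i.succ) * X i.succ ^ d :=
  Fin.sum_univ_succ _

theorem aeval_cyclicShift_diagonalForm {n : ℕ} (a : ℕ → R) (b : R) (d : ℕ)
    (ha : a (n + 1) = b ^ d * a 0) :
    aeval (Fin.cases (C b * X (Fin.last n)) (fun j : Fin n => X j.castSucc))
        (diagonalForm (fun i : Fin (n + 1) => a i) d)
      = diagonalForm (fun i : Fin (n + 1) => a (i + 1)) d := by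
  rw [diagonalForm_fin_succ, diagonalForm, Fin.sum_univ_castSucc]
  simp only [map_add, map_sum, map_mul, map_pow, aeval_C, aeval_X, Fin.cases_zero,
    Fin.cases_succ, algebraMap_eq, Fin.val_succ, Fin.val_castSucc, Fin.val_zero, Fin.val_last,
    ha, mul_pow]
  ring

end MvPolynomial

section TwistedProduct

variable {k L : Type*} [CommSemiring k] [CommSemiring L] [Algebra k L]

theorem AlgEquiv.apply_prod_range_pow_mul (σ : L ≃ₐ[k] L) (α : L) (i : ℕ) :
    σ (∏ j ∈ range i, (σ ^ j) α) * α = ∏ j ∈ range (i + 1), (σ ^ j) α := by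
  rw [prod_range_succ', map_prod, pow_zero, AlgEquiv.one_apply]
  congr 1
  exact prod_congr rfl fun j _ => by rw [pow_succ', AlgEquiv.mul_apply]

end TwistedProduct

section DiagonalCoeff

variable {k L : Type*} [Field k] [Field L] [Algebra k L]

noncomputable def diagonalCoeff (σ : L ≃ₐ[k] L) (lam₀ : k) (α : L) (i : ℕ) : L :=
  algebraMap k L lam₀ ^ (1 - i : ℤ) * ∏ j ∈ range i, (σ ^ j) α

variable (σ : L ≃ₐ[k] L) (lam₀ : k) (α : L)

theorem diagonalCoeff_zero : diagonalCoeff σ lam₀ α 0 = algebraMap k L lam₀ := by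
  simp [diagonalCoeff]

theorem diagonalCoeff_succ_eq (i : ℕ) :
    diagonalCoeff σ lam₀ α (i + 1)
      = algebraMap k L lam₀ ^ (-(i : ℤ)) * ∏ j ∈ range (i + 1), (σ ^ j) α := by
  rw [diagonalCoeff, Nat.cast_succ, sub_add_eq_sub_sub, sub_sub_cancel_left]

theorem diagonalCoeff_succ (hlam₀ : lam₀ ≠ 0) (i : ℕ) :
    diagonalCoeff σ lam₀ α (i + 1) = α / algebraMap k L lam₀ * σ (diagonalCoeff σ lam₀ α i) := by
  have hA : algebraMap k L lam₀ ≠ 0 := (map_ne_zero _).2 hlam₀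
  rw [diagonalCoeff_succ_eq, ← σ.apply_prod_range_pow_mul, diagonalCoeff, map_mul, map_zpow₀,
    AlgEquiv.commutes, zpow_sub₀ hA, zpow_neg, zpow_natCast, zpow_one]
  field_simp

theorem diagonalCoeff_eq_of_norm (hlam₀ : lam₀ ≠ 0) {n d : ℕ} {β : k}
    (hnorm : ∏ j ∈ range (n + 1), (σ ^ j) α
      = algebraMap k L lam₀ ^ (n + 1) * algebraMap k L β ^ d) :
    diagonalCoeff σ lam₀ α (n + 1) = algebraMap k L β ^ d * diagonalCoeff σ lam₀ α 0 := by
  have hA : algebraMap k L lam₀ ≠ 0 := (map_ne_zero _).2 hlam₀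
  rw [diagonalCoeff_succ_eq, diagonalCoeff_zero, hnorm, zpow_neg, zpow_natCast]
  field_simp
  ring

end DiagonalCoeff

theorem diagonal_hypersurface_conjugate_general
    (k L : Type*) [Field k] [Field L] [Algebra k L]
    (n : ℕ)
    (σ : L ≃ₐ[k] L)
    (lam₀ β : k) (hlam₀ : lam₀ ≠ 0)
    (α : L) (d : ℕ)
    (hnorm : (∏ j ∈ Finset.range (n + 1), (σ ^ j) α)
      = algebraMap k L lam₀ ^ (n + 1) * algebraMap k L β ^ d) :
    (MvPolynomial.aeval
        (Fin.cases (MvPolynomial.C (algebraMap k L β) * MvPolynomial.X (Fin.last n))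
          (fun j : Fin n => MvPolynomial.X j.castSucc)
          : Fin (n + 1) → MvPolynomial (Fin (n + 1)) L))
      (MvPolynomial.C (algebraMap k L lam₀) * MvPolynomial.X 0 ^ d
        + ∑ i : Fin n, MvPolynomial.C
            (algebraMap k L lam₀ ^ (-(i : ℤ)) *
              ∏ j ∈ Finset.range ((i : ℕ) + 1), (σ ^ j) α) *
            MvPolynomial.X i.succ ^ d)
    = MvPolynomial.C (α / algebraMap k L lam₀) *
        MvPolynomial.map (σ : L →+* L)
          (MvPolynomial.C (algebraMap k L lam₀) * MvPolynomial.X 0 ^ d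
            + ∑ i : Fin n, MvPolynomial.C
                (algebraMap k L lam₀ ^ (-(i : ℤ)) *
                  ∏ j ∈ Finset.range ((i : ℕ) + 1), (σ ^ j) α) *
                MvPolynomial.X i.succ ^ d) := by
  have hF : C (algebraMap k L lam₀) * X 0 ^ d
        + ∑ i : Fin n, C (algebraMap k L lam₀ ^ (-(i : ℤ)) *
            ∏ j ∈ range ((i : ℕ) + 1), (σ ^ j) α) * X i.succ ^ d
      = diagonalForm (fun i : Fin (n + 1) => diagonalCoeff σ lam₀ α i) d := by
    simp only [diagonalForm_fin_succ, Fin.val_zero, diagonalCoeff_zero, Fin.val_succ,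
      diagonalCoeff_succ_eq]
  rw [hF, aeval_cyclicShift_diagonalForm _ _ _ (diagonalCoeff_eq_of_norm σ lam₀ α hlam₀ hnorm),
    map_diagonalForm, C_mul_diagonalForm]
  simp only [diagonalCoeff_succ σ lam₀ α hlam₀]
  rfl

/-- Let `L/k` be a cyclic Galois extension of degree `n+1` with generator `σ`, let
`λ₀, β ∈ kˣ`, `α ∈ Lˣ` and `d ≥ 1` with `N_{L/k}(α) = λ₀^{n+1} β^d`.  For the diagonal
form `F = λ₀ X₀^d + ∑_{i=1}^{n} (λ₀^{1-i} ∏_{j=0}^{i-1} σʲ(α)) Xᵢ^d`, the substitution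
`X₀ ↦ β Xₙ, Xᵢ ↦ X_{i-1}` carries `F` to `(α/λ₀) · F^σ`, where `F^σ` is obtained by
applying `σ` to the coefficients of `F`.  (In other words, the matrix `C_β` defines an
isomorphism from the hypersurface `F = 0` onto its Galois conjugate `F^σ = 0`.) -/
theorem diagonal_hypersurface_conjugate
    (k L : Type*) [Field k] [Field L] [Algebra k L]
    [FiniteDimensional k L] [IsGalois k L]
    (n : ℕ) (hn : 1 ≤ n) (hdeg : Module.finrank k L = n + 1)
    (σ : L ≃ₐ[k] L) (hσ : ∀ τ : L ≃ₐ[k] L, τ ∈ Subgroup.zpowers σ)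
    (lam₀ β : k) (hlam₀ : lam₀ ≠ 0) (hβ : β ≠ 0)
    (α : L) (hα : α ≠ 0) (d : ℕ) (hd : 0 < d)
    (hnorm : (∏ j ∈ Finset.range (n + 1), (σ ^ j) α)
      = algebraMap k L lam₀ ^ (n + 1) * algebraMap k L β ^ d) :
    (MvPolynomial.aeval
        (Fin.cases (MvPolynomial.C (algebraMap k L β) * MvPolynomial.X (Fin.last n))
          (fun j : Fin n => MvPolynomial.X j.castSucc)
          : Fin (n + 1) → MvPolynomial (Fin (n + 1)) L))
      (MvPolynomial.C (algebraMap k L lam₀) * MvPolynomial.X 0 ^ d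
        + ∑ i : Fin n, MvPolynomial.C
            (algebraMap k L lam₀ ^ (-(i : ℤ)) *
              ∏ j ∈ Finset.range ((i : ℕ) + 1), (σ ^ j) α) *
            MvPolynomial.X i.succ ^ d)
    = MvPolynomial.C (α / algebraMap k L lam₀) *
        MvPolynomial.map (σ : L →+* L)
          (MvPolynomial.C (algebraMap k L lam₀) * MvPolynomial.X 0 ^ d
            + ∑ i : Fin n, MvPolynomial.C
                (algebraMap k L lam₀ ^ (-(i : ℤ)) *
                  ∏ j ∈ Finset.range ((i : ℕ) + 1), (σ ^ j) α) *
                MvPolynomial.X i.succ ^ d) :=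
  diagonal_hypersurface_conjugate_general k L n σ lam₀ β hlam₀ α d hnorm
end

section
/- Let K be the splitting field over ℚ of the polynomial f(t) = t³ + 12t² − 64. Then f is irreducible over ℚ, K/ℚ is a Galois extension of degree 3 whose Galois group is cyclic of order 3, and 2 is not a norm from K to ℚ: there is no x ∈ K with N_{K/ℚ}(x) = 2. -/
/-!
If `α` is a root of `t³ + 12t² - 64`, then `β = -4/α` is a root of `t³ - 3t + 1` (the minimal
polynomial of `2 cos (2π/9)`), whose other roots are `β² - 2` and `2 - β - β²`. So every root of
`t³ + 12t² - 64` is a polynomial in `β`, the splitting field is `ℚ(β)` of degree `3`, and its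
Galois group has order `3`. The norm of `p + qβ + rβ²` is an explicit cubic form `F(p, q, r)`.
Modulo `2`, `F` is the norm form of `𝔽₈/𝔽₂` (`2` is inert in `ℚ(β)`), so it vanishes only at `0`:
a solution of `F(a, b, c) = 2s³` in integers has `a, b, c` and then `s` even, and infinite descent
rules out `F(p, q, r) = 2` over `ℚ`.
-/

open Polynomial

section Galois

variable {K L : Type*} [Field K] [Field L] [Algebra K L] [FiniteDimensional K L] [IsGalois K L]

theorem PowerBasis.map_algEquiv_gen_eq_aroots (pb : PowerBasis K L) :
    (Finset.univ : Finset (L ≃ₐ[K] L)).val.map (fun σ ↦ σ pb.gen) =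
      (minpoly K pb.gen).aroots L := by
  have hinj : Function.Injective fun σ : L ≃ₐ[K] L ↦ σ pb.gen := fun σ τ h ↦
    AlgEquiv.coe_toAlgHom_injective (pb.algHom_ext h)
  apply Multiset.eq_of_le_of_card_le
  · rw [Multiset.le_iff_subset (Finset.univ.nodup.map hinj)]
    intro t ht
    obtain ⟨σ, -, rfl⟩ := Multiset.mem_map.mp ht
    rw [mem_aroots]
    exact ⟨minpoly.ne_zero pb.isIntegral_gen, by rw [aeval_algHom_apply, minpoly.aeval, map_zero]⟩
  · calc ((minpoly K pb.gen).aroots L).card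
        ≤ ((minpoly K pb.gen).map (algebraMap K L)).natDegree := card_roots' _
      _ = _ := by
        rw [natDegree_map, pb.natDegree_minpoly, Multiset.card_map, Finset.card_val,
          Finset.card_univ, ← Nat.card_eq_fintype_card, IsGalois.card_aut_eq_finrank, pb.finrank]

theorem PowerBasis.algebraMap_norm_aeval_gen (pb : PowerBasis K L) (P : K[X]) :
    algebraMap K L (Algebra.norm K (aeval pb.gen P)) =
      (((minpoly K pb.gen).aroots L).map (aeval · P)).prod := by
  rw [Algebra.norm_eq_prod_automorphisms, ← pb.map_algEquiv_gen_eq_aroots, Multiset.map_map,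
    Finset.prod_eq_multiset_prod]
  simp [aeval_algHom_apply]

end Galois

/-- The norm form `N(p + qβ + rβ²)` of `ℚ(β)`, `β³ = 3β - 1`, in the basis `1, β, β²`. -/
def cyclicCubicNorm {R : Type*} [CommRing R] (p q r : R) : R :=
  p ^ 3 + 6 * p ^ 2 * r - 3 * p * q ^ 2 + 3 * p * q * r + 9 * p * r ^ 2 - q ^ 3 + 3 * q * r ^ 2 +
    r ^ 3

section CyclicCubic

variable {R : Type*} [CommRing R] {β : R}

theorem cyclicCubic_eq_prod (hβ : β ^ 3 = 3 * β - 1) (t : R) :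
    t ^ 3 - 3 * t + 1 = (t - β) * (t - (β ^ 2 - 2)) * (t - (-β ^ 2 - β + 2)) := by
  linear_combination (t * β + t - β ^ 2 - β + 1) * hβ

theorem prod_conj_eq_cyclicCubicNorm (hβ : β ^ 3 = 3 * β - 1) (p q r : R) :
    (p + q * β + r * β ^ 2) * (p + q * (β ^ 2 - 2) + r * (β ^ 2 - 2) ^ 2) *
      (p + q * (-β ^ 2 - β + 2) + r * (-β ^ 2 - β + 2) ^ 2) = cyclicCubicNorm p q r := by
  unfold cyclicCubicNorm
  grind

theorem map_cyclicCubicNorm {S : Type*} [CommRing S] (f : R →+* S) (p q r : R) :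
    f (cyclicCubicNorm p q r) = cyclicCubicNorm (f p) (f q) (f r) := by
  simp only [cyclicCubicNorm, map_add, map_sub, map_mul, map_pow, map_ofNat]

@[norm_cast]
theorem Int.cast_cyclicCubicNorm (a b c : ℤ) :
    ((cyclicCubicNorm a b c : ℤ) : R) = cyclicCubicNorm (a : R) b c :=
  map_cyclicCubicNorm (Int.castRingHom R) a b c

theorem cyclicCubicNorm_mul (d p q r : R) :
    cyclicCubicNorm (d * p) (d * q) (d * r) = d ^ 3 * cyclicCubicNorm p q r := by
  unfold cyclicCubicNorm
  ring

theorem aroots_cyclicCubic {K L : Type*} [CommRing K] [CommRing L] [IsDomain L] [Algebra K L]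
    {β : L} (hβ : β ^ 3 = 3 * β - 1) :
    (X ^ 3 - 3 * X + 1 : K[X]).aroots L = {β, β ^ 2 - 2, -β ^ 2 - β + 2} := by
  have hCβ : C β ^ 3 = 3 * C β - 1 := by rw [← C_pow, hβ, C_sub, C_mul, C_1, map_ofNat]
  rw [aroots, show (X ^ 3 - 3 * X + 1 : K[X]).map (algebraMap K L) = X ^ 3 - 3 * X + 1 by simp,
    cyclicCubic_eq_prod hCβ]
  convert roots_multiset_prod_X_sub_C ({β, β ^ 2 - 2, -β ^ 2 - β + 2} : Multiset L) using 2
  simp [mul_assoc, map_ofNat C]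

theorem mem_adjoin_of_cyclicCubic_root {K L : Type*} [CommRing K] [CommRing L] [IsDomain L]
    [Algebra K L] {β t : L} (hβ : β ^ 3 = 3 * β - 1) (ht : t ^ 3 = 3 * t - 1) :
    t ∈ Algebra.adjoin K {β} := by
  have hβA := Algebra.self_mem_adjoin_singleton K β
  have h0 : (t - β) * (t - (β ^ 2 - 2)) * (t - (-β ^ 2 - β + 2)) = 0 := by
    rw [← cyclicCubic_eq_prod hβ]
    linear_combination ht
  obtain rfl | rfl | rfl : t = β ∨ t = β ^ 2 - 2 ∨ t = -β ^ 2 - β + 2 := by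
    simpa [sub_eq_zero, or_assoc] using h0
  · exact hβA
  · exact sub_mem (pow_mem hβA 2) (ofNat_mem _ 2)
  · exact add_mem (sub_mem (neg_mem (pow_mem hβA 2)) hβA) (ofNat_mem _ 2)

end CyclicCubic

theorem cyclicCubicNorm_zmod_two_eq_zero {a b c : ZMod 2} (h : cyclicCubicNorm a b c = 0) :
    a = 0 ∧ b = 0 ∧ c = 0 := by
  revert a b c h
  unfold cyclicCubicNorm
  decide

theorem two_dvd_of_two_dvd_cyclicCubicNorm {a b c : ℤ} (h : 2 ∣ cyclicCubicNorm a b c) :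
    2 ∣ a ∧ 2 ∣ b ∧ 2 ∣ c := by
  have hmod (x : ℤ) : 2 ∣ x ↔ (x : ZMod 2) = 0 := (ZMod.intCast_zmod_eq_zero_iff_dvd x 2).symm
  simp only [hmod, Int.cast_cyclicCubicNorm] at h ⊢
  exact cyclicCubicNorm_zmod_two_eq_zero h

theorem cyclicCubicNorm_ne_two_mul_cube {a b c s : ℤ} (hs : s ≠ 0) :
    cyclicCubicNorm a b c ≠ 2 * s ^ 3 := by
  induction hn : s.natAbs using Nat.strong_induction_on generalizing a b c s with
  | _ n ih =>
  intro h
  obtain ⟨⟨a, rfl⟩, ⟨b, rfl⟩, ⟨c, rfl⟩⟩ := two_dvd_of_two_dvd_cyclicCubicNorm ⟨s ^ 3, h⟩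
  rw [cyclicCubicNorm_mul] at h
  obtain ⟨s, rfl⟩ : 2 ∣ s :=
    Int.prime_two.dvd_of_dvd_pow (n := 3) ⟨2 * cyclicCubicNorm a b c, by linarith⟩
  refine ih s.natAbs ?_ (right_ne_zero_of_mul hs) rfl (by linarith)
  rw [← hn, Int.natAbs_mul, show (2 : ℤ).natAbs = 2 from rfl]
  have : s.natAbs ≠ 0 := by simpa using right_ne_zero_of_mul hs
  omega

theorem cyclicCubicNorm_ne_two (p q r : ℚ) : cyclicCubicNorm p q r ≠ 2 := by
  intro h
  set d : ℤ := p.den * q.den * r.den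
  have hd : d ≠ 0 := by positivity
  apply cyclicCubicNorm_ne_two_mul_cube hd (a := p.num * q.den * r.den) (b := p.den * q.num * r.den)
    (c := p.den * q.den * r.num)
  have key : cyclicCubicNorm ((d : ℚ) * p) (d * q) (d * r) = 2 * (d : ℚ) ^ 3 := by
    rw [cyclicCubicNorm_mul, h, mul_comm]
  rw [show (d : ℚ) * p = (p.num * q.den * r.den : ℤ) by push_cast [d, ← Rat.mul_den_eq_num]; ring,
    show (d : ℚ) * q = (p.den * q.num * r.den : ℤ) by push_cast [d, ← Rat.mul_den_eq_num]; ring,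
    show (d : ℚ) * r = (p.den * q.den * r.num : ℤ) by push_cast [d, ← Rat.mul_den_eq_num]; ring]
    at key
  exact_mod_cast key

theorem irreducible_map_of_monic_of_eval_ne_zero {P : ℤ[X]} (hmo : P.Monic)
    (hdeg : P.natDegree ∈ Finset.Icc 1 3) (h : ∀ n : ℤ, P.eval n ≠ 0) :
    Irreducible (P.map (Int.castRingHom ℚ)) := by
  refine irreducible_of_degree_le_three_of_not_isRoot (by rwa [hmo.natDegree_map]) fun r hr ↦ ?_
  obtain ⟨n, rfl⟩ := isInteger_of_is_root_of_monic hmo (r := r) (by rwa [aeval_def, ← eval_map])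
  apply h n
  simpa [eval_intCast_map] using hr

theorem irreducible_X_pow_three_add_twelve_mul_X_sq_sub_sixtyFour :
    Irreducible (X ^ 3 + 12 * X ^ 2 - 64 : ℚ[X]) := by
  have hroot (n : ℤ) : n ^ 3 + 12 * n ^ 2 - 64 ≠ 0 := by
    intro h
    have h5 := congrArg (Int.cast : ℤ → ZMod 5) h
    push_cast at h5
    generalize (n : ZMod 5) = m at h5
    revert m
    decide
  have := irreducible_map_of_monic_of_eval_ne_zero (P := X ^ 3 + 12 * X ^ 2 - 64)
    (by monicity!) (by rw [show natDegree _ = 3 by compute_degree!]; decide) (by simpa using hroot)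
  simpa using this

theorem irreducible_X_pow_three_sub_three_mul_X_add_one :
    Irreducible (X ^ 3 - 3 * X + 1 : ℚ[X]) := by
  have hroot (n : ℤ) : n ^ 3 - 3 * n + 1 ≠ 0 := by
    intro h
    have h2 := congrArg (Int.cast : ℤ → ZMod 2) h
    push_cast at h2
    generalize (n : ZMod 2) = m at h2
    revert m
    decide
  have := irreducible_map_of_monic_of_eval_ne_zero (P := X ^ 3 - 3 * X + 1)
    (by monicity!) (by rw [show natDegree _ = 3 by compute_degree!]; decide) (by simpa using hroot)
  simpa using this

section Generator

variable {K L : Type*} [Field K] [Field L] [Algebra K L] {β : L}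

theorem minpoly_eq_cyclicCubic (hirr : Irreducible (X ^ 3 - 3 * X + 1 : K[X]))
    (hβ : β ^ 3 = 3 * β - 1) : minpoly K β = X ^ 3 - 3 * X + 1 :=
  (minpoly.eq_of_irreducible_of_monic hirr
    (by simp only [map_add, map_sub, map_mul, map_pow, aeval_X, map_ofNat, map_one];
        linear_combination hβ) (by monicity!)).symm

theorem finrank_eq_three_of_adjoin_eq_top [FiniteDimensional K L]
    (hirr : Irreducible (X ^ 3 - 3 * X + 1 : K[X])) (hβ : β ^ 3 = 3 * β - 1)
    (hgen : Algebra.adjoin K {β} = ⊤) : Module.finrank K L = 3 := by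
  rw [(PowerBasis.ofAdjoinEqTop (.of_finite K β) hgen).finrank, PowerBasis.ofAdjoinEqTop_dim,
    minpoly_eq_cyclicCubic hirr hβ]
  compute_degree!

theorem exists_norm_eq_cyclicCubicNorm [FiniteDimensional K L] [IsGalois K L]
    (hirr : Irreducible (X ^ 3 - 3 * X + 1 : K[X])) (hβ : β ^ 3 = 3 * β - 1)
    (hgen : Algebra.adjoin K {β} = ⊤) (x : L) :
    ∃ p q r : K, Algebra.norm K x = cyclicCubicNorm p q r := by
  let pb := PowerBasis.ofAdjoinEqTop (.of_finite K β) hgen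
  obtain ⟨P, hPdeg, rfl⟩ := pb.exists_eq_aeval x
  have hP3 : P.natDegree < 3 := by
    rwa [← finrank_eq_three_of_adjoin_eq_top hirr hβ hgen, pb.finrank]
  refine ⟨P.coeff 0, P.coeff 1, P.coeff 2, (algebraMap K L).injective ?_⟩
  rw [pb.algebraMap_norm_aeval_gen, PowerBasis.ofAdjoinEqTop_gen, minpoly_eq_cyclicCubic hirr hβ,
    aroots_cyclicCubic hβ, map_cyclicCubicNorm, ← prod_conj_eq_cyclicCubicNorm hβ]
  simp [aeval_eq_sum_range' hP3, Finset.sum_range_succ, Algebra.smul_def, mul_assoc]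

end Generator

theorem cyclicCubic_neg_four_div_of_root {F : Type*} [Field F] [CharZero F] {y : F}
    (hy : y ^ 3 + 12 * y ^ 2 - 64 = 0) :
    (-4 / y) ^ 3 = 3 * (-4 / y) - 1 ∧ y = 4 * (-4 / y) ^ 2 - 12 := by
  have hy0 : y ≠ 0 := by rintro rfl; norm_num at hy
  constructor <;> field_simp <;> linear_combination hy

theorem exists_cyclicCubic_root_adjoin_eq_top :
    ∃ β : (X ^ 3 + 12 * X ^ 2 - 64 : ℚ[X]).SplittingField,
      β ^ 3 = 3 * β - 1 ∧ Algebra.adjoin ℚ {β} = ⊤ := by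
  set K := (X ^ 3 + 12 * X ^ 2 - 64 : ℚ[X]).SplittingField
  -- Restated with the statement's instance `DivisionRing.toRatAlgebra`, which is defeq but not
  -- syntactically equal to the splitting field's own `Algebra ℚ K`.
  have hsplit : ((X ^ 3 + 12 * X ^ 2 - 64 : ℚ[X]).map (algebraMap ℚ K)).Splits :=
    SplittingField.splits _
  have hadj : Algebra.adjoin ℚ ((X ^ 3 + 12 * X ^ 2 - 64 : ℚ[X]).rootSet K) = ⊤ :=
    SplittingField.adjoin_rootSet _
  have hroot {y : K} (hy : aeval y (X ^ 3 + 12 * X ^ 2 - 64 : ℚ[X]) = 0) :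
      y ^ 3 + 12 * y ^ 2 - 64 = 0 := by
    simpa only [map_add, map_sub, map_mul, map_pow, aeval_X, map_ofNat] using hy
  have hdeg : degree (X ^ 3 + 12 * X ^ 2 - 64 : ℚ[X]) = 3 := by compute_degree!
  obtain ⟨α, hα⟩ := hsplit.exists_eval_eq_zero (by rw [degree_map, hdeg]; decide)
  obtain ⟨hβ, -⟩ := cyclicCubic_neg_four_div_of_root (hroot (by rwa [aeval_def, ← eval_map]))
  refine ⟨-4 / α, hβ, eq_top_iff.2 (hadj.ge.trans (Algebra.adjoin_le fun y hy ↦ ?_))⟩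
  set A := Algebra.adjoin ℚ {-4 / α}
  obtain ⟨ht, hyt⟩ := cyclicCubic_neg_four_div_of_root (hroot (mem_rootSet.mp hy).2)
  have htA : -4 / y ∈ A := mem_adjoin_of_cyclicCubic_root hβ ht
  rw [SetLike.mem_coe, hyt]
  exact sub_mem (mul_mem (ofNat_mem A 4) (pow_mem htA 2)) (ofNat_mem A 12)

/-- The polynomial `f = t³ + 12t² − 64` is irreducible over `ℚ`, its splitting field
`K` is a cyclic Galois extension of `ℚ` of degree `3`, and `2` is not a norm from
`K` to `ℚ`. -/
theorem splitting_field_cubic_cyclic_two_not_norm :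
    Irreducible (X ^ 3 + 12 * X ^ 2 - 64 : ℚ[X]) ∧
    IsGalois ℚ (X ^ 3 + 12 * X ^ 2 - 64 : ℚ[X]).SplittingField ∧
    Module.finrank ℚ (X ^ 3 + 12 * X ^ 2 - 64 : ℚ[X]).SplittingField = 3 ∧
    IsCyclic ((X ^ 3 + 12 * X ^ 2 - 64 : ℚ[X]).SplittingField ≃ₐ[ℚ]
      (X ^ 3 + 12 * X ^ 2 - 64 : ℚ[X]).SplittingField) ∧
    Nat.card ((X ^ 3 + 12 * X ^ 2 - 64 : ℚ[X]).SplittingField ≃ₐ[ℚ]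
      (X ^ 3 + 12 * X ^ 2 - 64 : ℚ[X]).SplittingField) = 3 ∧
    ¬ ∃ x : (X ^ 3 + 12 * X ^ 2 - 64 : ℚ[X]).SplittingField,
        Algebra.norm ℚ x = 2 := by
  have hirr := irreducible_X_pow_three_add_twelve_mul_X_sq_sub_sixtyFour
  have hGal : IsGalois ℚ (X ^ 3 + 12 * X ^ 2 - 64 : ℚ[X]).SplittingField :=
    -- not found by instance search, which does not unfold the `Algebra ℚ` instance
    have : IsSplittingField ℚ (X ^ 3 + 12 * X ^ 2 - 64 : ℚ[X]).SplittingField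
        (X ^ 3 + 12 * X ^ 2 - 64) := IsSplittingField.splittingField _
    IsGalois.of_separable_splitting_field hirr.separable
  obtain ⟨β, hβ, hgen⟩ := exists_cyclicCubic_root_adjoin_eq_top
  have hrank := finrank_eq_three_of_adjoin_eq_top
    irreducible_X_pow_three_sub_three_mul_X_add_one hβ hgen
  have hcard := (IsGalois.card_aut_eq_finrank ℚ _).trans hrank
  refine ⟨hirr, hGal, hrank, isCyclic_of_prime_card hcard, hcard, ?_⟩
  rintro ⟨x, hx⟩
  obtain ⟨p, q, r, hN⟩ :=
    exists_norm_eq_cyclicCubicNorm irreducible_X_pow_three_sub_three_mul_X_add_one hβ hgen x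
  exact cyclicCubicNorm_ne_two p q r (hN ▸ hx)
end

section
/- The polynomial f(t) = t⁵ − t⁴ − 4t³ + 3t² + 3t − 1 is irreducible over ℚ, its splitting field K over ℚ is a Galois extension of degree 5 with cyclic Galois group, K embeds into the cyclotomic field ℚ(ζ₁₁) where ζ₁₁ is a primitive 11-th root of unity, and every root of f is a unit in the ring of integers of K. -/
open Polynomial IntermediateField

set_option maxHeartbeats 2000000
set_option synthInstance.maxHeartbeats 2000000

/-- Generic factorization of the quintic given one root. -/
theorem quintic_factor {R : Type*} [CommRing R] (a : R)
    (h : a ^ 5 - a ^ 4 - 4 * a ^ 3 + 3 * a ^ 2 + 3 * a - 1 = 0) :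
    (X ^ 5 - X ^ 4 - 4 * X ^ 3 + 3 * X ^ 2 + 3 * X - 1 : R[X]) =
      (X - C a) * (X - C (2 - a ^ 2)) * (X - C (a ^ 3 - 3 * a)) *
        (X - C (-a ^ 4 + 4 * a ^ 2 - 2)) * (X - C (a ^ 5 - 5 * a ^ 3 + 5 * a)) := by
  have h' : (C a : R[X]) ^ 5 - (C a) ^ 4 - 4 * (C a) ^ 3 + 3 * (C a) ^ 2 + 3 * (C a) - 1 = 0 := by
    have := congrArg (C : R →+* R[X]) h
    simpa only [map_sub, map_add, map_mul, map_pow, map_ofNat, map_one, map_zero] using this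
  simp only [map_sub, map_add, map_mul, map_pow, map_neg, map_ofNat]
  linear_combination (((C a)^10 + (C a)^9 - 9*(C a)^8 - 8*(C a)^7 + 28*(C a)^6 + 21*(C a)^5
      - 34*(C a)^4 - 19*(C a)^3 + 12*(C a)^2 + 3*(C a) + 1)
    + (-(C a)^9 + 9*(C a)^7 + (C a)^6 - 28*(C a)^5 - 8*(C a)^4 + 33*(C a)^3 + 16*(C a)^2
      - 9*(C a) - 3) * X
    + (-(C a)^7 + 6*(C a)^5 - 10*(C a)^3 + 3*(C a) - 3) * X^2
    + ((C a)^4 - 3*(C a)^2) * X^3 + X^4) * h'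

theorem cyclo_root : ∃ α : CyclotomicField 11 ℚ,
    α ^ 5 - α ^ 4 - 4 * α ^ 3 + 3 * α ^ 2 + 3 * α - 1 = 0 := by
  set L := CyclotomicField 11 ℚ
  haveI : IsCyclotomicExtension {11} ℚ L := CyclotomicField.isCyclotomicExtension 11 ℚ
  have hζ : IsPrimitiveRoot (IsCyclotomicExtension.zeta 11 ℚ L) ((11 : ℕ+) : ℕ) :=
    IsCyclotomicExtension.zeta_spec 11 ℚ L
  set ζ := IsCyclotomicExtension.zeta 11 ℚ L
  have h1 : ζ ^ 11 = 1 := by simpa using hζ.pow_eq_one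
  have hs := hζ.geom_sum_eq_zero (by norm_num)
  have hsum : 1 + ζ + ζ^2 + ζ^3 + ζ^4 + ζ^5 + ζ^6 + ζ^7 + ζ^8 + ζ^9 + ζ^10 = 0 := by
    simp only [PNat.mk_ofNat, PNat.val_ofNat, Finset.sum_range_succ,
      Finset.sum_range_zero, pow_zero, zero_add, pow_one] at hs
    linear_combination hs
  refine ⟨-(ζ + ζ ^ 10), ?_⟩
  linear_combination (2*ζ - 4*ζ^2 - 5*ζ^3 - ζ^6 - ζ^7 - ζ^8 - ζ^9 + 2*ζ^10 - 6*ζ^11 - 10*ζ^12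
    - ζ^17 - ζ^18 - ζ^19 - 4*ζ^20 - 10*ζ^21 - ζ^28 - ζ^29 - 5*ζ^30 - ζ^39) * h1 - hsum

theorem quintic_irreducible :
    Irreducible (X ^ 5 - X ^ 4 - 4 * X ^ 3 + 3 * X ^ 2 + 3 * X - 1 : ℚ[X]) := by
  set f : ℚ[X] := X ^ 5 - X ^ 4 - 4 * X ^ 3 + 3 * X ^ 2 + 3 * X - 1 with hf
  have hfm : f.Monic := by unfold f; monicity!
  have hfd : f.natDegree = 5 := by unfold f; compute_degree!
  set L := CyclotomicField 11 ℚ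
  haveI : IsCyclotomicExtension {11} ℚ L := CyclotomicField.isCyclotomicExtension 11 ℚ
  have hζ : IsPrimitiveRoot (IsCyclotomicExtension.zeta 11 ℚ L) ((11 : ℕ+) : ℕ) :=
    IsCyclotomicExtension.zeta_spec 11 ℚ L
  set ζ := IsCyclotomicExtension.zeta 11 ℚ L with hζdef
  haveI : FiniteDimensional ℚ L := IsCyclotomicExtension.finiteDimensional {11} ℚ L
  have h1 : ζ ^ 11 = 1 := by simpa using hζ.pow_eq_one
  have hs := hζ.geom_sum_eq_zero (by norm_num)
  have hsum : 1 + ζ + ζ^2 + ζ^3 + ζ^4 + ζ^5 + ζ^6 + ζ^7 + ζ^8 + ζ^9 + ζ^10 = 0 := by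
    simp only [PNat.mk_ofNat, PNat.val_ofNat, Finset.sum_range_succ,
      Finset.sum_range_zero, pow_zero, zero_add, pow_one] at hs
    linear_combination hs
  set α : L := -(ζ + ζ ^ 10) with hαdef
  have hα : α ^ 5 - α ^ 4 - 4 * α ^ 3 + 3 * α ^ 2 + 3 * α - 1 = 0 := by
    rw [hαdef]
    linear_combination (2*ζ - 4*ζ^2 - 5*ζ^3 - ζ^6 - ζ^7 - ζ^8 - ζ^9 + 2*ζ^10 - 6*ζ^11 - 10*ζ^12
      - ζ^17 - ζ^18 - ζ^19 - 4*ζ^20 - 10*ζ^21 - ζ^28 - ζ^29 - 5*ζ^30 - ζ^39) * h1 - hsum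
  have haev : aeval α f = 0 := by
    rw [hf]
    simp only [map_sub, map_add, map_mul, map_pow, aeval_X, map_ofNat, map_one]
    linear_combination hα
  have hint : IsIntegral ℚ α := IsIntegral.of_finite ℚ α
  have hζint : IsIntegral ℚ ζ := IsIntegral.of_finite ℚ ζ
  have hdvd : minpoly ℚ α ∣ f := minpoly.dvd ℚ α haev
  have hfne : f ≠ 0 := hfm.ne_zero
  have hdegle : (minpoly ℚ α).natDegree ≤ 5 := hfd ▸ natDegree_le_of_dvd hdvd hfne
  -- the intermediate field generated by α
  set E := ℚ⟮α⟯ with hE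
  have hEfr : Module.finrank ℚ E = (minpoly ℚ α).natDegree := adjoin.finrank hint
  -- finrank of L over ℚ is 10
  have hLfr : Module.finrank ℚ L = 10 := by
    rw [IsCyclotomicExtension.finrank (n := 11) L (cyclotomic.irreducible_rat (by norm_num))]
    norm_num [Nat.totient_prime (by norm_num : Nat.Prime 11)]
  -- ζ generates L over E
  haveI : FiniteDimensional ℚ E := inferInstance
  haveI : FiniteDimensional E L := FiniteDimensional.right ℚ E L
  have htopQ : IntermediateField.adjoin ℚ {ζ} = (⊤ : IntermediateField ℚ L) := by
    apply IntermediateField.toSubalgebra_injective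
    rw [IntermediateField.top_toSubalgebra]
    exact top_le_iff.mp <|
      (IsCyclotomicExtension.adjoin_primitive_root_eq_top (n := 11) (A := ℚ) hζ) ▸ algebra_adjoin_le_adjoin ℚ {ζ}
  have htopE : IntermediateField.adjoin E {ζ} = (⊤ : IntermediateField E L) := by
    apply IntermediateField.restrictScalars_injective ℚ
    rw [IntermediateField.restrictScalars_top]
    rw [eq_top_iff, ← htopQ, IntermediateField.adjoin_le_iff, Set.singleton_subset_iff]
    exact (IntermediateField.mem_restrictScalars ℚ).mpr (mem_adjoin_simple_self E ζ)
  -- minpoly of ζ over E has degree ≤ 2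
  set γ : E := AdjoinSimple.gen ℚ α with hγ
  have hγmap : algebraMap E L γ = α := AdjoinSimple.algebraMap_gen ℚ α
  set g : Polynomial E := X ^ 2 + C γ * X + 1 with hg
  have hgm : g.Monic := by unfold g; monicity!
  have hgd : g.natDegree = 2 := by unfold g; compute_degree!
  have hgev : aeval ζ g = 0 := by
    rw [hg]
    simp only [map_add, map_mul, map_pow, aeval_X, aeval_C, map_one, hγmap]
    rw [hαdef]
    linear_combination -h1
  have hgne : g ≠ 0 := hgm.ne_zero
  have hmin2 : (minpoly E ζ).natDegree ≤ 2 := hgd ▸ natDegree_le_of_dvd (minpoly.dvd E ζ hgev) hgne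
  have hζintE : IsIntegral E ζ := IsIntegral.of_finite E ζ
  have hfr2 : Module.finrank E L ≤ 2 := by
    have e1 : Module.finrank E (IntermediateField.adjoin E ({ζ} : Set L)) =
        (minpoly E ζ).natDegree := adjoin.finrank hζintE
    have e2 : Module.finrank E (IntermediateField.adjoin E ({ζ} : Set L)) =
        Module.finrank E L := by
      rw [htopE]
      exact (IntermediateField.topEquiv (F := E) (E := L)).toLinearEquiv.finrank_eq
    omega
  have htower : Module.finrank ℚ E * Module.finrank E L = 10 :=
    (Module.finrank_mul_finrank ℚ E L).trans hLfr
  have hge5 : 5 ≤ (minpoly ℚ α).natDegree := by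
    rw [← hEfr]
    by_contra hlt
    push_neg at hlt
    interval_cases h : Module.finrank ℚ ↥E <;> omega
  have hdeq : f.natDegree ≤ (minpoly ℚ α).natDegree := by omega
  have : f = minpoly ℚ α :=
    eq_of_monic_of_dvd_of_natDegree_le (minpoly.monic hint) hfm hdvd hdeq
  rw [this]
  exact minpoly.irreducible hint

/-- The polynomial `f = t⁵ − t⁴ − 4t³ + 3t² + 3t − 1` is irreducible over `ℚ`, its
splitting field `K` is a cyclic Galois extension of `ℚ` of degree `5`, `K` embeds into
the 11-th cyclotomic field `ℚ(ζ₁₁)`, and every root of `f` in `K` is a unit of the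
ring of integers of `K` (i.e. both it and its inverse are algebraic integers). -/
theorem splitting_field_quintic_cyclic_in_cyclotomic11_roots_units :
    Irreducible (X ^ 5 - X ^ 4 - 4 * X ^ 3 + 3 * X ^ 2 + 3 * X - 1 : ℚ[X]) ∧
    IsGalois ℚ (X ^ 5 - X ^ 4 - 4 * X ^ 3 + 3 * X ^ 2 + 3 * X - 1 : ℚ[X]).SplittingField ∧
    Module.finrank ℚ
      (X ^ 5 - X ^ 4 - 4 * X ^ 3 + 3 * X ^ 2 + 3 * X - 1 : ℚ[X]).SplittingField = 5 ∧
    IsCyclic ((X ^ 5 - X ^ 4 - 4 * X ^ 3 + 3 * X ^ 2 + 3 * X - 1 : ℚ[X]).SplittingField ≃ₐ[ℚ]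
      (X ^ 5 - X ^ 4 - 4 * X ^ 3 + 3 * X ^ 2 + 3 * X - 1 : ℚ[X]).SplittingField) ∧
    Nat.card ((X ^ 5 - X ^ 4 - 4 * X ^ 3 + 3 * X ^ 2 + 3 * X - 1 : ℚ[X]).SplittingField ≃ₐ[ℚ]
      (X ^ 5 - X ^ 4 - 4 * X ^ 3 + 3 * X ^ 2 + 3 * X - 1 : ℚ[X]).SplittingField) = 5 ∧
    Nonempty ((X ^ 5 - X ^ 4 - 4 * X ^ 3 + 3 * X ^ 2 + 3 * X - 1 : ℚ[X]).SplittingField →ₐ[ℚ]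
      CyclotomicField 11 ℚ) ∧
    ∀ x : (X ^ 5 - X ^ 4 - 4 * X ^ 3 + 3 * X ^ 2 + 3 * X - 1 : ℚ[X]).SplittingField,
      aeval x (X ^ 5 - X ^ 4 - 4 * X ^ 3 + 3 * X ^ 2 + 3 * X - 1 : ℚ[X]) = 0 →
      IsIntegral ℤ x ∧ IsIntegral ℤ x⁻¹ := by
  set f : ℚ[X] := X ^ 5 - X ^ 4 - 4 * X ^ 3 + 3 * X ^ 2 + 3 * X - 1 with hf
  set K := f.SplittingField with hK
  have hfm : f.Monic := by unfold f; monicity!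
  have hfd : f.natDegree = 5 := by unfold f; compute_degree!
  have irr : Irreducible f := quintic_irreducible
  have hsep : f.Separable := irr.separable
  haveI : IsSplittingField ℚ K f := Polynomial.IsSplittingField.splittingField f
  haveI hgal : IsGalois ℚ K := IsGalois.of_separable_splitting_field hsep
  -- a root of f in K
  have hdeg0 : f.degree ≠ 0 := by
    rw [degree_eq_natDegree hfm.ne_zero, hfd]; norm_num
  obtain ⟨x, hx⟩ := Splits.exists_eval_eq_zero (SplittingField.splits f) (by rwa [degree_map])
  rw [eval_map_algebraMap] at hx
  have hx' : x ^ 5 - x ^ 4 - 4 * x ^ 3 + 3 * x ^ 2 + 3 * x - 1 = 0 := by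
    have hx2 : aeval x (X ^ 5 - X ^ 4 - 4 * X ^ 3 + 3 * X ^ 2 + 3 * X - 1 : ℚ[X]) = 0 := hx
    simp only [map_sub, map_add, map_mul, map_pow, aeval_X, map_ofNat, map_one] at hx2
    linear_combination hx2
  have hfac := quintic_factor x hx'
  have hxmem := mem_adjoin_simple_self ℚ x
  -- every root of f in K lies in ℚ⟮x⟯
  have hroots : ∀ y : K, aeval y f = 0 → y ∈ ℚ⟮x⟯ := by
    intro y hy
    have hy' : y ^ 5 - y ^ 4 - 4 * y ^ 3 + 3 * y ^ 2 + 3 * y - 1 = 0 := by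
      have hy2 : aeval y (X ^ 5 - X ^ 4 - 4 * X ^ 3 + 3 * X ^ 2 + 3 * X - 1 : ℚ[X]) = 0 := hy
      simp only [map_sub, map_add, map_mul, map_pow, aeval_X, map_ofNat, map_one] at hy2
      linear_combination hy2
    have := congrArg (eval y) hfac
    simp only [eval_sub, eval_add, eval_mul, eval_pow, eval_X, eval_C, eval_ofNat,
      eval_one] at this
    rw [hy'] at this
    have h2 : (2 : K) ∈ ℚ⟮x⟯ := by
      have := IntermediateField.algebraMap_mem ℚ⟮x⟯ (2 : ℚ); simpa using this
    have h5 : (5 : K) ∈ ℚ⟮x⟯ := by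
      have := IntermediateField.algebraMap_mem ℚ⟮x⟯ (5 : ℚ); simpa using this
    have h4 : (4 : K) ∈ ℚ⟮x⟯ := by
      have := IntermediateField.algebraMap_mem ℚ⟮x⟯ (4 : ℚ); simpa using this
    have h3 : (3 : K) ∈ ℚ⟮x⟯ := by
      have := IntermediateField.algebraMap_mem ℚ⟮x⟯ (3 : ℚ); simpa using this
    rcases mul_eq_zero.mp this.symm with h | h
    · rcases mul_eq_zero.mp h with h | h
      · rcases mul_eq_zero.mp h with h | h
        · rcases mul_eq_zero.mp h with h | h
          · rw [sub_eq_zero] at h; rw [h]; exact hxmem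
          · rw [sub_eq_zero] at h; rw [h]
            exact sub_mem h2 (pow_mem hxmem 2)
        · rw [sub_eq_zero] at h; rw [h]
          exact sub_mem (pow_mem hxmem 3) (mul_mem h3 hxmem)
      · rw [sub_eq_zero] at h; rw [h]
        exact sub_mem (add_mem (neg_mem (pow_mem hxmem 4)) (mul_mem h4 (pow_mem hxmem 2))) h2
    · rw [sub_eq_zero] at h; rw [h]
      exact add_mem (sub_mem (pow_mem hxmem 5) (mul_mem h5 (pow_mem hxmem 3))) (mul_mem h5 hxmem)
  have htopx : ℚ⟮x⟯ = (⊤ : IntermediateField ℚ K) := by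
    apply IntermediateField.toSubalgebra_injective
    rw [IntermediateField.top_toSubalgebra]
    refine top_le_iff.mp ?_
    rw [← Polynomial.IsSplittingField.adjoin_rootSet K f]
    refine (Algebra.adjoin_le fun y hy => ?_ : _ ≤ ℚ⟮x⟯.toSubalgebra)
    exact hroots y ((mem_rootSet.mp hy).2)
  have hxint : IsIntegral ℚ x := IsIntegral.of_finite ℚ x
  have hmp : minpoly ℚ x = f := (minpoly.eq_of_irreducible_of_monic irr hx hfm).symm
  have hfr : Module.finrank ℚ K = 5 := by
    have e1 : Module.finrank ℚ (ℚ⟮x⟯ : IntermediateField ℚ K) = (minpoly ℚ x).natDegree :=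
      adjoin.finrank hxint
    rw [htopx] at e1
    rw [← (IntermediateField.topEquiv (F := ℚ) (E := K)).toLinearEquiv.finrank_eq, e1, hmp, hfd]
  have hcard : Nat.card (K ≃ₐ[ℚ] K) = 5 := by
    rw [IsGalois.card_aut_eq_finrank ℚ K, hfr]
  haveI : Fact (Nat.Prime 5) := ⟨by norm_num⟩
  have hcyc : IsCyclic (K ≃ₐ[ℚ] K) := isCyclic_of_prime_card hcard
  -- embedding into the cyclotomic field
  obtain ⟨α, hα⟩ := cyclo_root
  have hsplits : (f.map (algebraMap ℚ (CyclotomicField 11 ℚ))).Splits := by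
    have hmap : f.map (algebraMap ℚ (CyclotomicField 11 ℚ)) =
        (X - C α) * (X - C (2 - α ^ 2)) * (X - C (α ^ 3 - 3 * α)) *
          (X - C (-α ^ 4 + 4 * α ^ 2 - 2)) * (X - C (α ^ 5 - 5 * α ^ 3 + 5 * α)) := by
      rw [hf]
      simp only [Polynomial.map_sub, Polynomial.map_add, Polynomial.map_mul,
        Polynomial.map_pow, Polynomial.map_X, Polynomial.map_ofNat, Polynomial.map_one]
      exact quintic_factor α hα
    rw [hmap]
    exact Splits.mul (Splits.mul (Splits.mul (Splits.mul (Splits.X_sub_C _)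
      (Splits.X_sub_C _)) (Splits.X_sub_C _)) (Splits.X_sub_C _)) (Splits.X_sub_C _)
  refine ⟨irr, hgal, hfr, hcyc, hcard, ⟨SplittingField.lift f hsplits⟩, ?_⟩
  -- roots are units in the ring of integers
  intro y hy
  have hy' : y ^ 5 - y ^ 4 - 4 * y ^ 3 + 3 * y ^ 2 + 3 * y - 1 = 0 := by
    have hy2 : aeval y (X ^ 5 - X ^ 4 - 4 * X ^ 3 + 3 * X ^ 2 + 3 * X - 1 : ℚ[X]) = 0 := hy
    simp only [map_sub, map_add, map_mul, map_pow, aeval_X, map_ofNat, map_one] at hy2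
    linear_combination hy2
  have hy0 : y ≠ 0 := by
    intro h; rw [h] at hy'; norm_num at hy'
  constructor
  · refine ⟨X ^ 5 - X ^ 4 - 4 * X ^ 3 + 3 * X ^ 2 + 3 * X - 1, by monicity!, ?_⟩
    rw [← aeval_def]
    simp only [map_sub, map_add, map_mul, map_pow, aeval_X, map_ofNat, map_one]
    linear_combination hy'
  · refine ⟨X ^ 5 - 3 * X ^ 4 - 3 * X ^ 3 + 4 * X ^ 2 + X - 1, by monicity!, ?_⟩
    rw [← aeval_def]
    simp only [map_sub, map_add, map_mul, map_pow, aeval_X, map_ofNat, map_one]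
    have hu : y⁻¹ = y ^ 4 - y ^ 3 - 4 * y ^ 2 + 3 * y + 3 := by
      field_simp
      linear_combination -hy'
    rw [hu]
    linear_combination (y^15 - 4*y^14 - 10*y^13 + 56*y^12 + 22*y^11 - 310*y^10 + 86*y^9
      + 859*y^8 - 480*y^7 - 1251*y^6 + 781*y^5 + 948*y^4 - 444*y^3 - 374*y^2 + 54*y + 43) * hy'
end
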